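/- arXiv:1512.02445 — 7 statements merged into one kernel-verified Lean document; each statement's English description precedes it below -/
import Mathlib

section
/- Let G be a finite group and (ρ i)_{i ∈ ι} a complete set of inequivalent irreducible representations of G on spaces V i. Then the ℂ-algebra homomorphism from the group algebra ℂ[G] (the monoid algebra MonoidAlgebra ℂ G) to the product algebra ∏_{i ∈ ι} End_ℂ(V i), sending an element a = ∑_{s ∈ G} a(s)·s to the family ( ∑_{s ∈ G} a(s) • ρ i (s) )_{i ∈ ι}, is bijective, i.e. it is an isomorphism of ℂ-algebras. -/
/-!
The map is the action of `ℂ[G]` on the simple `ℂ[G]`-modules `V i`. It is injective because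
`ℂ[G]` is semisimple (Maschke): it is the sum of its simple left ideals, each isomorphic to some
`V i` by completeness, so an element acting trivially on every `V i` annihilates `ℂ[G]` itself.
It is surjective by the Jacobson density theorem for `Π i, V i`: since the `V i` are pairwise
non-isomorphic, Schur's lemma makes every `ℂ[G]`-endomorphism of the product act on each factor by
a scalar, so every family of linear maps `V i → V i` commutes with all of them.
-/

open CategoryTheory Representation
open scoped MonoidAlgebra

section DensityTheorem

variable {k A ι : Type*} [Field k] [Ring A] [Algebra k A] {M : ι → Type*}
  [∀ i, AddCommGroup (M i)] [∀ i, Module A (M i)] [∀ i, Module k (M i)]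
  [∀ i, IsScalarTower k A (M i)]

variable (k A M) in
noncomputable def Algebra.lsmulPi : A →ₐ[k] Π i, Module.End k (M i) :=
  AlgHom.pi fun i ↦ Algebra.lsmul k k (M i)

@[simp]
theorem Algebra.lsmulPi_apply (a : A) (i : ι) (m : M i) : lsmulPi k A M a i m = a • m := rfl

theorem Algebra.lsmulPi_injective [IsSemisimpleRing A]
    (h : ∀ S : Submodule A A, IsSimpleModule A S → ∃ i, Nonempty (S ≃ₗ[A] M i)) :
    Function.Injective (lsmulPi k A M) := by
  refine (injective_iff_map_eq_zero _).2 fun a ha ↦ ?_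
  have hS : ∀ S : Submodule A A, IsSimpleModule A S → a ∈ S.annihilator := fun S hS ↦ by
    obtain ⟨i, ⟨e⟩⟩ := h S hS
    rw [Submodule.annihilator, e.annihilator_eq, Module.mem_annihilator]
    exact fun m ↦ LinearMap.congr_fun (congr_fun ha i) m
  have ha : a ∈ Module.annihilator A A := by
    rw [← Submodule.annihilator_top, ← IsSemisimpleModule.sSup_simples_eq_top, sSup_eq_iSup',
      Submodule.annihilator_iSup, Submodule.mem_iInf]
    exact fun S ↦ hS S.1 S.2
  simpa using Module.mem_annihilator.mp ha 1

variable [Finite ι] [∀ i, IsSimpleModule A (M i)] [∀ i, Module.Finite k (M i)] [IsAlgClosed k]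

theorem Module.End.exists_apply_eq_smul_of_pi_isSimpleModule
    (hM : Pairwise fun i j ↦ IsEmpty (M i ≃ₗ[A] M j)) (φ : Module.End A (Π i, M i)) :
    ∃ c : ι → k, ∀ x i, φ x i = c i • x i := by
  classical
  have := Fintype.ofFinite ι
  let φ' (i j : ι) : M j →ₗ[A] M i := LinearMap.proj i ∘ₗ φ ∘ₗ LinearMap.single A M j
  have hoff (i j : ι) (hij : i ≠ j) : φ' i j = 0 :=
    (LinearMap.bijective_or_eq_zero _).resolve_left fun hb ↦
      (hM hij.symm).false (LinearEquiv.ofBijective _ hb)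
  have hdiag (i : ι) : ∃ c : k, φ' i i = algebraMap k _ c :=
    (IsSimpleModule.algebraMap_end_bijective_of_isAlgClosed k).2 _ |>.imp fun _ h ↦ h.symm
  choose c hc using hdiag
  refine ⟨c, fun x i ↦ ?_⟩
  calc φ x i = ∑ j, φ' i j (x j) := by
        conv_lhs => rw [← Finset.univ_sum_single x]
        simp [φ']
    _ = φ' i i (x i) := Finset.sum_eq_single i (fun j _ hj ↦ by simp [hoff i j hj.symm]) (by simp)
    _ = c i • x i := by simp [hc]

theorem Algebra.lsmulPi_surjective (hM : Pairwise fun i j ↦ IsEmpty (M i ≃ₗ[A] M j)) :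
    Function.Surjective (lsmulPi k A M) := by
  classical
  intro f
  let F : Module.End k (Π i, M i) := LinearMap.pi fun i ↦ f i ∘ₗ LinearMap.proj i
  let F' : Module.End (Module.End A (Π i, M i)) (Π i, M i) :=
    { toFun := F
      map_add' := F.map_add
      map_smul' := fun φ x ↦ by
        obtain ⟨c, hc⟩ := Module.End.exists_apply_eq_smul_of_pi_isSimpleModule (k := k) hM φ
        ext i
        simp [F, Module.End.smul_def, hc] }
  let b := Module.finBasis k (Π i, M i)
  obtain ⟨a, ha⟩ := jacobson_density F' (Finset.univ.image b)
  have hF : F = Algebra.lsmul k k (Π i, M i) a :=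
    b.ext fun j ↦ ha (b j) (Finset.mem_image_of_mem b (Finset.mem_univ j))
  refine ⟨a, funext fun i ↦ LinearMap.ext fun y ↦ ?_⟩
  simpa [F] using (congr_fun (LinearMap.congr_fun hF (Pi.single i y)) i).symm

end DensityTheorem

theorem Representation.asAlgebraHom_eq_sum {k G V : Type*} [CommSemiring k] [Monoid G]
    [Fintype G] [AddCommMonoid V] [Module k V] (ρ : Representation k G V) (a : k[G]) :
    asAlgebraHom ρ a = ∑ s, a.coeff s • ρ s := by
  rw [asAlgebraHom_def, MonoidAlgebra.lift_apply, Finsupp.sum_fintype _ _ (by simp)]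

namespace FDRep

section Monoid

universe u

variable {k : Type u} {G : Type*} [Field k] [Monoid G]

noncomputable abbrev toModuleMonoidAlgebra : FDRep k G ⥤ ModuleCat k[G] :=
  forget₂ (FDRep k G) (Rep k G) ⋙ Rep.toModuleMonoidAlgebra

theorem nonempty_iso_iff_nonempty_linearEquiv_asModule {V W : FDRep k G} :
    Nonempty (V ≅ W) ↔ Nonempty (asModule V.ρ ≃ₗ[k[G]] asModule W.ρ) :=
  ⟨fun ⟨e⟩ ↦ ⟨(toModuleMonoidAlgebra.mapIso e).toLinearEquiv⟩,
    fun ⟨e⟩ ↦ ⟨toModuleMonoidAlgebra.preimageIso e.toModuleIso⟩⟩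

theorem simple_of_isSimpleModule_asModule (V : FDRep k G)
    [IsSimpleModule k[G] (asModule V.ρ)] : Simple V :=
  have : Simple (toModuleMonoidAlgebra.obj V) :=
    (simple_of_isSimpleModule : Simple (ModuleCat.of k[G] (asModule V.ρ)))
  toModuleMonoidAlgebra.simple_of_simple_obj V

theorem exists_linearEquiv_asModule (M : Type u) [AddCommGroup M] [Module k M] [Module k[G] M]
    [IsScalarTower k k[G] M] [Module.Finite k M] :
    ∃ V : FDRep k G, Nonempty (asModule V.ρ ≃ₗ[k[G]] M) := by
  have h : (ofModule' (G := G) (k := k) M).asAlgebraHom = Algebra.lsmul k k M :=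
    (MonoidAlgebra.lift k _ G).apply_symm_apply _
  exact ⟨FDRep.of (ofModule' M),
    ⟨{ AddEquiv.refl M with map_smul' := fun a x ↦ LinearMap.congr_fun (congrArg (· a) h) x }⟩⟩

end Monoid

theorem isSimpleModule_asModule {k G : Type*} [Field k] [Group G] [Finite G]
    [NeZero (Nat.card G : k)] (V : FDRep k G) [Simple V] : IsSimpleModule k[G] (asModule V.ρ) := by
  have : Nontrivial (asModule V.ρ) := by
    by_contra h
    rw [not_nontrivial_iff_subsingleton] at h
    refine id_nonzero V (toModuleMonoidAlgebra.map_injective ?_)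
    ext x
    exact h.elim _ _
  refine { eq_bot_or_eq_top := fun N ↦ ?_ }
  -- By Maschke `N` has a complement; Schur's lemma applies to the projection onto `N`.
  obtain ⟨N', hN⟩ := exists_isCompl N
  let p : Module.End k[G] (asModule V.ρ) := N.projection N' hN
  obtain ⟨q, hq⟩ := toModuleMonoidAlgebra.map_surjective (ModuleCat.ofHom p)
  rw [← Submodule.range_projection hN]
  by_cases hq0 : q = 0
  · left
    have hp : p = 0 := by
      rw [hq0, Functor.map_zero] at hq
      exact congrArg ModuleCat.Hom.hom hq.symm
    rw [show N.projection N' hN = p from rfl, hp, LinearMap.range_zero]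
  · right
    have := isIso_of_hom_simple hq0
    have hbij := ConcreteCategory.bijective_of_isIso (toModuleMonoidAlgebra.map q)
    rw [hq] at hbij
    exact LinearMap.range_eq_top.2 hbij.2

end FDRep

/-- **Wedderburn decomposition of the group algebra.**
If `(ρ i)_{i : ι}` is a complete set of inequivalent irreducible finite-dimensional complex
representations of a finite group `G`, then the `ℂ`-algebra homomorphism
`ℂ[G] → ∏ i, End ℂ (V i)` sending `a = ∑ s, a s • s` to `(∑ s, a s • ρ i s)_i` is bijective. -/
theorem groupAlgebra_to_matrix_algebras_bijective
    {G : Type} [Group G] [Fintype G] {ι : Type} [Fintype ι]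
    (ρ : ι → FDRep ℂ G)
    (hirr : ∀ i, Simple (ρ i))
    (hinequiv : ∀ i j, i ≠ j → ¬ Nonempty (ρ i ≅ ρ j))
    (hcomplete : ∀ W : FDRep ℂ G, Simple W → ∃ i, Nonempty (W ≅ ρ i)) :
    Function.Bijective
      (fun (a : MonoidAlgebra ℂ G) => fun i : ι => ∑ s, a.coeff s • (ρ i).ρ s) := by
  have hmap : (fun (a : ℂ[G]) (i : ι) ↦ ∑ s, a.coeff s • (ρ i).ρ s) =
      Algebra.lsmulPi ℂ ℂ[G] fun i ↦ asModule (ρ i).ρ := by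
    ext a i x
    rw [← asAlgebraHom_eq_sum]
    rfl
  rw [hmap]
  constructor
  · refine Algebra.lsmulPi_injective fun S hS ↦ ?_
    obtain ⟨V, ⟨e⟩⟩ := FDRep.exists_linearEquiv_asModule (k := ℂ) (G := G) S
    have : IsSimpleModule ℂ[G] (asModule V.ρ) := IsSimpleModule.congr e
    obtain ⟨i, hi⟩ := hcomplete V (FDRep.simple_of_isSimpleModule_asModule V)
    obtain ⟨f⟩ := FDRep.nonempty_iso_iff_nonempty_linearEquiv_asModule.1 hi
    exact ⟨i, ⟨e.symm.trans f⟩⟩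
  · have := fun i ↦ FDRep.isSimpleModule_asModule (ρ i)
    refine Algebra.lsmulPi_surjective fun i j hij ↦ ⟨fun e ↦ hinequiv i j hij ?_⟩
    exact FDRep.nonempty_iso_iff_nonempty_linearEquiv_asModule.2 ⟨e⟩
end

section
/- Let F be a field and x, y : Fin 2 → F with x 0 · y 0 + x 1 · y 1 ≠ 0. Then there exists an invertible matrix A ∈ GL_2(F) such that, setting x' = A *ᵥ x (the matrix-vector product) and y' = y ᵥ* A⁻¹ (the vector-matrix product), one has x' 0 · y' 0 = 0, x' 1 ≠ 0, and y' 1 ≠ 0. -/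
open Matrix
open scoped MatrixGroups

/-!
The action `(x, y) ↦ (A x, y A⁻¹)` preserves `x ⬝ᵥ y`. Since `x ⬝ᵥ y ≠ 0`, the matrix with rows
`(x 1, -x 0)` and `y` is invertible and sends `x` to `(0, x ⬝ᵥ y)`. The invariant then reads
`x' 1 * y' 1 = x ⬝ᵥ y ≠ 0`, so both factors are nonzero.
-/

namespace Matrix

theorem GeneralLinearGroup.mulVec_dotProduct_vecMul_inv {ι R : Type*} [Fintype ι]
    [DecidableEq ι] [CommRing R] (A : GL ι R) (x y : ι → R) :
    ((A : Matrix ι ι R) *ᵥ x) ⬝ᵥ (y ᵥ* ((A⁻¹ : GL ι R) : Matrix ι ι R)) = x ⬝ᵥ y := by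
  rw [dotProduct_comm, dotProduct_mulVec, vecMul_vecMul, ← Units.val_mul, inv_mul_cancel,
    Units.val_one, vecMul_one, dotProduct_comm]

theorem exists_GL_fin_two_mulVec_eq {R : Type*} [CommRing R] (x y : Fin 2 → R)
    (h : IsUnit (x ⬝ᵥ y)) :
    ∃ A : GL (Fin 2) R, (A : Matrix (Fin 2) (Fin 2) R) *ᵥ x = ![0, x ⬝ᵥ y] := by
  have hdet : IsUnit (!![x 1, -x 0; y 0, y 1]).det := by
    convert h using 1
    simp only [det_fin_two_of, dotProduct, Fin.sum_univ_two]
    ring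
  refine ⟨GeneralLinearGroup.mk'' _ hdet, ?_⟩
  change !![x 1, -x 0; y 0, y 1] *ᵥ x = _
  ext i
  fin_cases i <;>
    simp only [mulVec, dotProduct, Fin.sum_univ_two, of_apply, cons_val', cons_val_fin_one,
      cons_val_zero, cons_val_one, Fin.zero_eta, Fin.mk_one] <;> ring

end Matrix

/-- **The 2×2 reduction lemma.**
If `x, y : Fin 2 → F` satisfy `x 0 * y 0 + x 1 * y 1 ≠ 0`, then there is an invertible matrix
`A ∈ GL₂(F)` such that, for `x' = A *ᵥ x` and `y' = y ᵥ* A⁻¹`, one has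
`x' 0 * y' 0 = 0`, `x' 1 ≠ 0` and `y' 1 ≠ 0`. -/
theorem exists_GL2_reduction {F : Type*} [Field F] (x y : Fin 2 → F)
    (h : x 0 * y 0 + x 1 * y 1 ≠ 0) :
    ∃ A : GL (Fin 2) F,
      ((A : Matrix (Fin 2) (Fin 2) F) *ᵥ x) 0 *
        (y ᵥ* ((A⁻¹ : GL (Fin 2) F) : Matrix (Fin 2) (Fin 2) F)) 0 = 0 ∧
      ((A : Matrix (Fin 2) (Fin 2) F) *ᵥ x) 1 ≠ 0 ∧
      (y ᵥ* ((A⁻¹ : GL (Fin 2) F) : Matrix (Fin 2) (Fin 2) F)) 1 ≠ 0 := by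
  have hxy : x ⬝ᵥ y ≠ 0 := by simpa [dotProduct, Fin.sum_univ_two] using h
  obtain ⟨A, hA⟩ := exists_GL_fin_two_mulVec_eq x y hxy.isUnit
  have hx'0 : ((A : Matrix (Fin 2) (Fin 2) F) *ᵥ x) 0 = 0 := by simp [hA]
  have hinv := GeneralLinearGroup.mulVec_dotProduct_vecMul_inv A x y
  rw [dotProduct, Fin.sum_univ_two, hx'0, zero_mul, zero_add] at hinv
  exact ⟨A, by rw [hx'0, zero_mul], mul_ne_zero_iff.mp (hinv ▸ hxy)⟩
end

section
/- Let F be a finite field of characteristic p and let n ≥ 1. For every vector z : Fin n → F with ∑_{k} z_k = 1, there exist a permutation σ of Fin n, an element b ∈ F with b ≠ 0, and an integer i with 1 ≤ i ≤ n, such that, writing z' = z ∘ σ: (i) for every j with i ≤ j ≤ n, the partial sum z'_1 + z'_2 + ⋯ + z'_j of the first j entries is nonzero; (ii) z'_1 = z'_2 = ⋯ = z'_i = b; and (iii) p divides i − 1. -/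
/-!
Induct on `n`, keeping only the hypothesis that the total sum `s` is nonzero. If every entry
equals `s`, take the identity and `i = n`: then `n • s = s`, so `(n - 1) s = 0` and `p ∣ n - 1`.
Otherwise move an entry `a ≠ s` to the last position; the remaining `n - 1` entries sum to
`s - a ≠ 0`, so by induction they can be put in normal form, and appending `a` keeps it one,
since the only new partial sum is the total sum `s`.
-/

open Finset

section PrefixSum

variable {M : Type*} [AddCommMonoid M] {n : ℕ}

def prefixSum (w : Fin n → M) (j : ℕ) : M :=
  ∑ k ∈ univ.filter (fun k : Fin n => (k : ℕ) < j), w k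

theorem prefixSum_of_le (w : Fin n → M) {j : ℕ} (hj : n ≤ j) : prefixSum w j = ∑ k, w k :=
  sum_congr (filter_true_of_mem fun k _ => k.isLt.trans_le hj) fun _ _ => rfl

theorem prefixSum_snoc (w : Fin n → M) (a : M) {j : ℕ} (hj : j ≤ n) :
    prefixSum (Fin.snoc w a : Fin (n + 1) → M) j = prefixSum w j := by
  simp only [prefixSum, sum_filter, Fin.sum_univ_castSucc, Fin.snoc_castSucc, Fin.val_castSucc,
    Fin.val_last, if_neg hj.not_gt, add_zero]

end PrefixSum

theorem Fin.snoc_comp_perm {α : Type*} {n : ℕ} (w : Fin n → α) (a : α)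
    (σ : Equiv.Perm (Fin n)) :
    (Fin.snoc (w ∘ σ) a : Fin (n + 1) → α) =
      Fin.snoc w a ∘ finSuccEquivLast.symm.permCongr (Equiv.optionCongr σ) := by
  funext k
  induction k using Fin.lastCases <;> simp [Equiv.permCongr_apply]

section NormalForm

variable {M : Type*} [AddCommMonoid M] (p : ℕ) {n : ℕ}

structure IsNormalForm (w : Fin n → M) (b : M) (i : ℕ) : Prop where
  ne_zero : b ≠ 0
  one_le : 1 ≤ i
  le_length : i ≤ n
  prefixSum_ne_zero : ∀ j : ℕ, i ≤ j → j ≤ n → prefixSum w j ≠ 0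
  eq_of_lt : ∀ k : Fin n, (k : ℕ) < i → w k = b
  dvd : p ∣ i - 1

theorem IsNormalForm.snoc {w : Fin n → M} {b : M} {i : ℕ} (h : IsNormalForm p w b i) {a : M}
    (ha : ∑ k, w k + a ≠ 0) : IsNormalForm p (Fin.snoc w a : Fin (n + 1) → M) b i := by
  refine ⟨h.ne_zero, h.one_le, h.le_length.trans n.le_succ, fun j hij hj => ?_,
    fun k hk => ?_, h.dvd⟩
  · rcases hj.lt_or_eq with hj | rfl
    · rw [prefixSum_snoc w a (Nat.lt_succ_iff.mp hj)]
      exact h.prefixSum_ne_zero j hij (Nat.lt_succ_iff.mp hj)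
    · rwa [prefixSum_of_le _ le_rfl, Fin.sum_univ_castSucc, Fin.snoc_last,
        Fintype.sum_congr _ _ fun k => Fin.snoc_castSucc (α := fun _ => M) a w k]
  · have hkn : (k : ℕ) < n := hk.trans_le h.le_length
    rw [show k = (⟨k, hkn⟩ : Fin n).castSucc from rfl, Fin.snoc_castSucc]
    exact h.eq_of_lt _ hk

end NormalForm

section Ring

variable {R : Type*} [Ring R] [NoZeroDivisors R] (p : ℕ) [CharP R p] {n : ℕ}

theorem isNormalForm_of_forall_eq_sum {w : Fin n → R} (hw : ∀ k, w k = ∑ l, w l)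
    (hs : ∑ l, w l ≠ 0) : IsNormalForm p w (∑ l, w l) n := by
  set s := ∑ l, w l
  have hn : n ≠ 0 := by rintro rfl; exact hs (Fintype.sum_empty w)
  have hns : (n : R) * s = s := by
    conv_rhs => rw [show s = ∑ l, w l from rfl, Fintype.sum_congr _ _ hw]
    simp [nsmul_eq_mul]
  have hcast : ((n - 1 : ℕ) : R) = 0 := by
    refine (mul_eq_zero.mp ?_).resolve_right hs
    rw [Nat.cast_pred (Nat.pos_of_ne_zero hn), sub_mul, hns, one_mul, sub_self]
  refine ⟨hs, Nat.one_le_iff_ne_zero.mpr hn, le_rfl, fun j hj _ => ?_, fun k _ => hw k,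
    (CharP.cast_eq_zero_iff R p _).mp hcast⟩
  rwa [prefixSum_of_le w hj]

theorem exists_perm_isNormalForm (z : Fin n → R) (hs : ∑ k, z k ≠ 0) :
    ∃ (σ : Equiv.Perm (Fin n)) (b : R) (i : ℕ), IsNormalForm p (z ∘ σ) b i := by
  induction n with
  | zero => exact absurd (Fintype.sum_empty z) hs
  | succ n ih =>
    by_cases hall : ∀ k, z k = ∑ l, z l
    · exact ⟨1, _, _, isNormalForm_of_forall_eq_sum p hall hs⟩
    push Not at hall
    obtain ⟨k₀, hk₀⟩ := hall
    set y := z ∘ Equiv.swap k₀ (Fin.last n)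
    have hy : y = Fin.snoc (Fin.init y) (z k₀) := by
      simpa [y] using (Fin.snoc_init_self y).symm
    have hsum : ∑ k, Fin.init y k + z k₀ = ∑ k, z k := by
      rw [← Equiv.sum_comp (Equiv.swap k₀ (Fin.last n)) z, Fin.sum_univ_castSucc]
      simp [y, Fin.init]
    obtain ⟨σ, b, i, h⟩ := ih (Fin.init y) fun h0 => hk₀ (by rw [← hsum, h0, zero_add])
    have h' := h.snoc p (a := z k₀) <| by
      rwa [Function.comp_def, Equiv.sum_comp σ (Fin.init y), hsum]
    rw [Fin.snoc_comp_perm, ← hy] at h'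
    exact ⟨Equiv.swap k₀ (Fin.last n) * _, b, i, h'⟩

end Ring

theorem exists_perm_normal_form_general
    {F : Type*} [Field F] (p : ℕ) [CharP F p]
    (n : ℕ) (z : Fin n → F) (hz : ∑ k, z k = 1) :
    ∃ (σ : Equiv.Perm (Fin n)) (b : F) (i : ℕ),
      b ≠ 0 ∧ 1 ≤ i ∧ i ≤ n ∧
      (∀ j : ℕ, i ≤ j → j ≤ n →
        ∑ k ∈ Finset.univ.filter (fun k : Fin n => (k : ℕ) < j), z (σ k) ≠ 0) ∧
      (∀ k : Fin n, (k : ℕ) < i → z (σ k) = b) ∧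
      p ∣ i - 1 := by
  obtain ⟨σ, b, i, h⟩ := exists_perm_isNormalForm p z (hz ▸ one_ne_zero)
  exact ⟨σ, b, i, h.ne_zero, h.one_le, h.le_length, h.prefixSum_ne_zero, h.eq_of_lt, h.dvd⟩

/-- **Normalization of a vector of products by a permutation (Proposition on `S_i(n)`).**
Let `F` be a finite field of characteristic `p`, `n ≥ 1`, and `z : Fin n → F` with `∑ z k = 1`.
Then there are a permutation `σ` of `Fin n`, a nonzero `b ∈ F` and `1 ≤ i ≤ n` such that, for
`z' = z ∘ σ`: every partial sum `z'_1 + ⋯ + z'_j` with `i ≤ j ≤ n` is nonzero, the first `i`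
entries of `z'` all equal `b`, and `p` divides `i - 1`. (Entries are 1-based in the informal
statement; here the entry `z'_j` is `z (σ k)` for the `k : Fin n` with `(k : ℕ) = j - 1`.) -/
theorem exists_perm_normal_form
    {F : Type*} [Field F] [Fintype F] (p : ℕ) [CharP F p]
    (n : ℕ) (hn : 1 ≤ n) (z : Fin n → F) (hz : ∑ k, z k = 1) :
    ∃ (σ : Equiv.Perm (Fin n)) (b : F) (i : ℕ),
      b ≠ 0 ∧ 1 ≤ i ∧ i ≤ n ∧
      (∀ j : ℕ, i ≤ j → j ≤ n →
        ∑ k ∈ Finset.univ.filter (fun k : Fin n => (k : ℕ) < j), z (σ k) ≠ 0) ∧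
      (∀ k : Fin n, (k : ℕ) < i → z (σ k) = b) ∧
      p ∣ i - 1 :=
  exists_perm_normal_form_general p n z hz
end

section
/- Model a Bratteli diagram as follows: for each i ∈ ℕ let V i be a finite nonempty type with V 0 a singleton, and let M i : Matrix (V (i+1)) (V i) ℕ. Define dimension vectors d i : V i → ℕ by d 0 = 1 and d (i+1) α = ∑_{β ∈ V i} M i α β · d i β. Suppose the diagram is locally free with rank sequence λ : ℕ → ℚ, i.e. for every i ≥ 0 and every β ∈ V i, ∑_{α ∈ V (i+1)} M i α β · d (i+1) α = λ (i+1) · d i β. Then for every i ∈ ℕ, ∑_{α ∈ V i} (d i α)² = ∏_{j=1}^{i} λ j. -/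
open Finset

/-- **Dimension of the path algebra of a locally free Bratteli diagram.**
Model a Bratteli diagram by finite nonempty vertex types `V i` with `V 0` a singleton and
multiplicity matrices `M i : Matrix (V (i+1)) (V i) ℕ`; let `d i` be the dimension vectors
(`d 0 = 1`, `d (i+1) = M i *ᵥ d i`). If the diagram is locally free with rank sequence
`λ : ℕ → ℚ` (i.e. `∑ α, M i α β * d (i+1) α = λ (i+1) * d i β` for all `i` and `β : V i`),
then `∑ α : V i, (d i α)² = ∏_{j=1}^{i} λ j` for every `i`. -/
theorem locally_free_dim_eq_prod_rank
    (V : ℕ → Type) [∀ i, Fintype (V i)] [∀ i, Nonempty (V i)]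
    (hV0 : Subsingleton (V 0))
    (M : ∀ i, Matrix (V (i + 1)) (V i) ℕ)
    (d : ∀ i, V i → ℕ)
    (hd0 : ∀ v : V 0, d 0 v = 1)
    (hdsucc : ∀ i (α : V (i + 1)), d (i + 1) α = ∑ β : V i, M i α β * d i β)
    (lam : ℕ → ℚ)
    (hfree : ∀ i (β : V i),
      ∑ α : V (i + 1), (M i α β : ℚ) * (d (i + 1) α : ℚ) = lam (i + 1) * (d i β : ℚ)) :
    ∀ i : ℕ, ∑ α : V i, (d i α : ℚ) ^ 2 = ∏ j ∈ Finset.Icc 1 i, lam j := by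
  intro i
  induction i with
  | zero =>
    have : (Finset.univ : Finset (V 0)).card = 1 := by
      rw [Finset.card_eq_one]
      obtain ⟨v⟩ := (inferInstance : Nonempty (V 0))
      exact ⟨v, Finset.eq_singleton_iff_unique_mem.mpr ⟨Finset.mem_univ v,
        fun x _ => Subsingleton.elim x v⟩⟩
    rw [show Finset.Icc 1 0 = ∅ by simp, Finset.prod_empty]
    calc ∑ α : V 0, (d 0 α : ℚ) ^ 2 = ∑ _α : V 0, 1 := by
          apply Finset.sum_congr rfl; intro α _; rw [hd0]; norm_num
      _ = 1 := by rw [Finset.sum_const, this]; simp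
  | succ n ih =>
    have key : ∑ α : V (n + 1), (d (n + 1) α : ℚ) ^ 2
        = lam (n + 1) * ∑ β : V n, (d n β : ℚ) ^ 2 := by
      calc ∑ α : V (n + 1), (d (n + 1) α : ℚ) ^ 2
          = ∑ α : V (n + 1), ∑ β : V n,
              (M n α β : ℚ) * (d n β : ℚ) * (d (n + 1) α : ℚ) := by
            apply Finset.sum_congr rfl; intro α _
            rw [sq, hdsucc n α]
            push_cast
            rw [Finset.sum_mul]
        _ = ∑ β : V n, (∑ α : V (n + 1), (M n α β : ℚ) * (d (n + 1) α : ℚ)) * (d n β : ℚ) := by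
            rw [Finset.sum_comm]
            apply Finset.sum_congr rfl; intro β _
            rw [Finset.sum_mul]
            apply Finset.sum_congr rfl; intro α _; ring
        _ = ∑ β : V n, lam (n + 1) * (d n β : ℚ) * (d n β : ℚ) := by
            apply Finset.sum_congr rfl; intro β _; rw [hfree n β]
        _ = lam (n + 1) * ∑ β : V n, (d n β : ℚ) ^ 2 := by
            rw [Finset.mul_sum]; apply Finset.sum_congr rfl; intro β _; ring
    rw [key, ih, Finset.prod_Icc_succ_top (by omega : 1 ≤ n + 1)]
    ring
end

section
/- Model a Bratteli diagram by finite nonempty types V i (i ∈ ℕ) with V 0 a singleton and matrices M i : Matrix (V (i+1)) (V i) ℕ; let d i : V i → ℕ be the dimension vectors (d 0 = 1, d (i+1) = M i *ᵥ d i), and suppose the diagram is locally free with rank sequence λ : ℕ → ℚ. Define the up operator U taking v : V i → ℚ to (M i) *ᵥ v : V (i+1) → ℚ, and the down operator D taking v : V (i+1) → ℚ to (M i)ᵀ *ᵥ v : V i → ℚ. Let n ≥ 1 and let u, e : Fin n → ℕ with u k ≥ 1 and e k ≥ 1 for all k, and suppose the word D^{e_n}U^{u_n}⋯D^{e_1}U^{u_1}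 is admissible: for every k ≤ n, ∑_{j ≤ k} e j ≤ ∑_{j ≤ k} u j. Let w0̂ be the vector obtained from the indicator function of the unique element of V 0 by applying U u_1 times, then D e_1 times, then U u_2 times, then D e_2 times, …, then U u_n times, then D e_n times; it is a vector on V s with s = ∑_{j=1}^n (u j − e j). Then w0̂ = C • (d s), where C = ∏_{k=1}^{n} ∏_{t=0}^{e_k − 1} λ( (∑_{j ≤ k} u j) − (∑_{j < k} e j) − t ); in particular ⟨w0̂, α⟩ = C · d s α for every α ∈ V s. -/
open Finset

/-- A graded vector of a Bratteli diagram with vertex types `V i`: a rational vector on each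
level. -/
def GradedVec (V : ℕ → Type) : Type := ∀ i, V i → ℚ

/-- The up operator `U` of a Bratteli diagram: it takes the level-`i` component to a
level-`(i+1)` component via the multiplicity matrix `M i` (so `U v = (M i) *ᵥ v` levelwise). -/
def upOp (V : ℕ → Type) [∀ i, Fintype (V i)] (M : ∀ i, Matrix (V (i + 1)) (V i) ℕ)
    (v : GradedVec V) : GradedVec V := fun i =>
  match i with
  | 0 => fun _ => 0
  | j + 1 => fun α => ∑ β : V j, (M j α β : ℚ) * v j β

/-- The down operator `D` of a Bratteli diagram: it takes the level-`(i+1)` component to a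
level-`i` component via the transposed multiplicity matrix (so `D v = (M i)ᵀ *ᵥ v`
levelwise). -/
def downOp (V : ℕ → Type) [∀ i, Fintype (V i)] (M : ∀ i, Matrix (V (i + 1)) (V i) ℕ)
    (v : GradedVec V) : GradedVec V := fun i α => ∑ γ : V (i + 1), (M i γ α : ℚ) * v (i + 1) γ

/-- The indicator graded vector of the root `0̂` (the unique vertex at level `0`). -/
def rootVec (V : ℕ → Type) : GradedVec V := fun i _ => if i = 0 then 1 else 0

section Helpers

variable {V : ℕ → Type} [∀ i, Fintype (V i)]
variable {M : ∀ i, Matrix (V (i + 1)) (V i) ℕ}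
variable {d : ∀ i, V i → ℕ}
variable {lam : ℕ → ℚ}

/-- The graded vector `v` is supported at level `s` where it equals `c • d s`. -/
def Psup (d : ∀ i, V i → ℕ) (s : ℕ) (c : ℚ) (v : GradedVec V) : Prop :=
  (∀ α, v s α = c * d s α) ∧ ∀ i, i ≠ s → ∀ α, v i α = 0

/-- Admissibility of a list of (u,e)-blocks starting at level `s`. -/
def Adm : List (ℕ × ℕ) → ℕ → Prop
  | [], _ => True
  | p :: l, s => p.2 ≤ s + p.1 ∧ Adm l (s + p.1 - p.2)

/-- Level reached after applying the blocks starting at level `s`. -/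
def wordLevel : List (ℕ × ℕ) → ℕ → ℕ
  | [], s => s
  | p :: l, s => wordLevel l (s + p.1 - p.2)

/-- The scalar produced by the word. -/
def wordConst (lam : ℕ → ℚ) : List (ℕ × ℕ) → ℕ → ℚ
  | [], _ => 1
  | p :: l, s => (∏ t ∈ Finset.range p.2, lam (s + p.1 - t)) * wordConst lam l (s + p.1 - p.2)

theorem up_P (hdsucc : ∀ i (α : V (i + 1)), d (i + 1) α = ∑ β : V i, M i α β * d i β)
    {s : ℕ} {c : ℚ} {v : GradedVec V} (hv : Psup d s c v) :
    Psup d (s + 1) c (upOp V M v) := by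
  obtain ⟨h1, h2⟩ := hv
  constructor
  · intro α
    show (∑ β : V s, (M s α β : ℚ) * v s β) = c * d (s + 1) α
    rw [hdsucc s α]
    push_cast
    rw [Finset.mul_sum]
    refine Finset.sum_congr rfl fun β _ => ?_
    rw [h1 β]; ring
  · rintro (_ | j) hi α
    · rfl
    · show (∑ β : V j, (M j α β : ℚ) * v j β) = 0
      refine Finset.sum_eq_zero fun β _ => ?_
      rw [h2 j (by omega) β, mul_zero]

theorem down_P
    (hfree : ∀ i (β : V i),
      ∑ α : V (i + 1), (M i α β : ℚ) * (d (i + 1) α : ℚ) = lam (i + 1) * (d i β : ℚ))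
    {s : ℕ} {c : ℚ} {v : GradedVec V} (hv : Psup d (s + 1) c v) :
    Psup d s (lam (s + 1) * c) (downOp V M v) := by
  obtain ⟨h1, h2⟩ := hv
  constructor
  · intro α
    show (∑ γ : V (s + 1), (M s γ α : ℚ) * v (s + 1) γ) = lam (s + 1) * c * d s α
    calc (∑ γ : V (s + 1), (M s γ α : ℚ) * v (s + 1) γ)
        = c * ∑ γ : V (s + 1), (M s γ α : ℚ) * (d (s + 1) γ : ℚ) := by
          rw [Finset.mul_sum]
          refine Finset.sum_congr rfl fun γ _ => ?_
          rw [h1 γ]; ring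
      _ = lam (s + 1) * c * d s α := by rw [hfree s α]; ring
  · intro i hi α
    show (∑ γ : V (i + 1), (M i γ α : ℚ) * v (i + 1) γ) = 0
    refine Finset.sum_eq_zero fun γ _ => ?_
    rw [h2 (i + 1) (by omega) γ, mul_zero]

theorem upIter_P (hdsucc : ∀ i (α : V (i + 1)), d (i + 1) α = ∑ β : V i, M i α β * d i β)
    {s : ℕ} {c : ℚ} {v : GradedVec V} (hv : Psup d s c v) (m : ℕ) :
    Psup d (s + m) c ((upOp V M)^[m] v) := by
  induction m with
  | zero => exact hv
  | succ m ih =>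
    rw [Function.iterate_succ_apply']
    exact up_P hdsucc ih

theorem downIter_P
    (hfree : ∀ i (β : V i),
      ∑ α : V (i + 1), (M i α β : ℚ) * (d (i + 1) α : ℚ) = lam (i + 1) * (d i β : ℚ)) :
    ∀ (m s : ℕ) (c : ℚ) (v : GradedVec V), Psup d s c v → m ≤ s →
    Psup d (s - m) (c * ∏ t ∈ Finset.range m, lam (s - t)) ((downOp V M)^[m] v) := by
  intro m
  induction m with
  | zero => intro s c v hv _; simpa using hv
  | succ m ih =>
    intro s c v hv hm
    rw [Function.iterate_succ_apply]
    obtain ⟨s', rfl⟩ : ∃ s', s = s' + 1 := ⟨s - 1, by omega⟩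
    have h1 : Psup d s' (lam (s' + 1) * c) (downOp V M v) := down_P hfree hv
    have h2 := ih s' (lam (s' + 1) * c) _ h1 (by omega)
    have hl : s' - m = s' + 1 - (m + 1) := by omega
    rw [hl] at h2
    have hc : c * ∏ t ∈ Finset.range (m + 1), lam (s' + 1 - t)
        = lam (s' + 1) * c * ∏ t ∈ Finset.range m, lam (s' - t) := by
      rw [Finset.prod_range_succ']
      have he : ∀ t, s' + 1 - (t + 1) = s' - t := fun t => by omega
      simp only [he, Nat.add_sub_cancel, Nat.sub_zero]
      ring
    rw [hc]
    exact h2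

theorem word_P
    (hdsucc : ∀ i (α : V (i + 1)), d (i + 1) α = ∑ β : V i, M i α β * d i β)
    (hfree : ∀ i (β : V i),
      ∑ α : V (i + 1), (M i α β : ℚ) * (d (i + 1) α : ℚ) = lam (i + 1) * (d i β : ℚ)) :
    ∀ (l : List (ℕ × ℕ)) (s : ℕ) (c : ℚ) (v : GradedVec V), Psup d s c v → Adm l s →
    Psup d (wordLevel l s) (c * wordConst lam l s)
      (l.foldl (fun w p => (downOp V M)^[p.2] ((upOp V M)^[p.1] w)) v) := by
  intro l
  induction l with
  | nil => intro s c v hv _; simpa [wordLevel, wordConst] using hv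
  | cons p l ih =>
    intro s c v hv hadm
    obtain ⟨h1, h2⟩ := hadm
    have hu := upIter_P hdsucc hv p.1
    have hd := downIter_P hfree p.2 (s + p.1) c _ hu h1
    have := ih (s + p.1 - p.2) _ _ hd h2
    simp only [List.foldl_cons, wordLevel, wordConst]
    rw [mul_assoc] at this
    exact this

end Helpers

section Glue

theorem sum_filter_le_zero {n : ℕ} {A : Type*} [AddCommMonoid A] (g : Fin (n + 1) → A) :
    ∑ j ∈ Finset.univ.filter (fun j : Fin (n + 1) => j ≤ 0), g j = g 0 := by
  rw [Finset.sum_filter]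
  rw [Fin.sum_univ_succ]
  simp [Fin.le_zero_iff, Fin.succ_ne_zero]

theorem sum_filter_le_succ {n : ℕ} {A : Type*} [AddCommMonoid A] (g : Fin (n + 1) → A)
    (k : Fin n) :
    ∑ j ∈ Finset.univ.filter (fun j : Fin (n + 1) => j ≤ k.succ), g j
      = g 0 + ∑ j ∈ Finset.univ.filter (fun j : Fin n => j ≤ k), g j.succ := by
  rw [Finset.sum_filter, Finset.sum_filter, Fin.sum_univ_succ]
  simp [Fin.succ_le_succ_iff, Fin.zero_le]

theorem sum_filter_lt_succ {n : ℕ} {A : Type*} [AddCommMonoid A] (g : Fin (n + 1) → A)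
    (k : Fin n) :
    ∑ j ∈ Finset.univ.filter (fun j : Fin (n + 1) => j < k.succ), g j
      = g 0 + ∑ j ∈ Finset.univ.filter (fun j : Fin n => j < k), g j.succ := by
  rw [Finset.sum_filter, Finset.sum_filter, Fin.sum_univ_succ]
  simp [Fin.succ_lt_succ_iff, Fin.succ_pos]

theorem adm_ofFn : ∀ {n : ℕ} (f : Fin n → ℕ × ℕ) (s : ℕ),
    (∀ k : Fin n, ∑ j ∈ Finset.univ.filter (fun j : Fin n => j ≤ k), (f j).2
      ≤ s + ∑ j ∈ Finset.univ.filter (fun j : Fin n => j ≤ k), (f j).1) →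
    Adm (List.ofFn f) s := by
  intro n
  induction n with
  | zero => intro f s _; simp [Adm]
  | succ n ih =>
    intro f s h
    rw [List.ofFn_succ]
    refine ⟨?_, ?_⟩
    · have := h 0
      rwa [sum_filter_le_zero, sum_filter_le_zero] at this
    · refine ih _ _ fun k => ?_
      have h0 := h 0
      rw [sum_filter_le_zero, sum_filter_le_zero] at h0
      have hk := h k.succ
      rw [sum_filter_le_succ, sum_filter_le_succ] at hk
      omega

theorem level_ofFn : ∀ {n : ℕ} (f : Fin n → ℕ × ℕ) (s : ℕ),
    (∀ k : Fin n, ∑ j ∈ Finset.univ.filter (fun j : Fin n => j ≤ k), (f j).2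
      ≤ s + ∑ j ∈ Finset.univ.filter (fun j : Fin n => j ≤ k), (f j).1) →
    wordLevel (List.ofFn f) s + ∑ j, (f j).2 = s + ∑ j, (f j).1 := by
  intro n
  induction n with
  | zero => intro f s _; simp [wordLevel]
  | succ n ih =>
    intro f s h
    have h0 := h 0
    rw [sum_filter_le_zero, sum_filter_le_zero] at h0
    rw [List.ofFn_succ]
    have tail : ∀ k : Fin n,
        ∑ j ∈ Finset.univ.filter (fun j : Fin n => j ≤ k), (f j.succ).2
          ≤ (s + (f 0).1 - (f 0).2)
            + ∑ j ∈ Finset.univ.filter (fun j : Fin n => j ≤ k), (f j.succ).1 := by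
      intro k
      have hk := h k.succ
      rw [sum_filter_le_succ, sum_filter_le_succ] at hk
      omega
    have hI : wordLevel (List.ofFn fun j => f j.succ) (s + (f 0).1 - (f 0).2)
        + ∑ j : Fin n, (f j.succ).2
        = (s + (f 0).1 - (f 0).2) + ∑ j : Fin n, (f j.succ).1 :=
      ih (fun j => f j.succ) (s + (f 0).1 - (f 0).2) tail
    rw [Fin.sum_univ_succ, Fin.sum_univ_succ]
    show wordLevel (List.ofFn fun j => f j.succ) (s + (f 0).1 - (f 0).2) + _ = _
    omega

theorem const_ofFn (lam : ℕ → ℚ) : ∀ {n : ℕ} (f : Fin n → ℕ × ℕ) (s : ℕ),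
    (∀ k : Fin n, ∑ j ∈ Finset.univ.filter (fun j : Fin n => j ≤ k), (f j).2
      ≤ s + ∑ j ∈ Finset.univ.filter (fun j : Fin n => j ≤ k), (f j).1) →
    wordConst lam (List.ofFn f) s
      = ∏ k : Fin n, ∏ t ∈ Finset.range (f k).2,
          lam (s + (∑ j ∈ Finset.univ.filter (fun j : Fin n => j ≤ k), (f j).1)
            - (∑ j ∈ Finset.univ.filter (fun j : Fin n => j < k), (f j).2) - t) := by
  intro n
  induction n with
  | zero => intro f s _; simp [wordConst]
  | succ n ih =>
    intro f s h
    have h0 := h 0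
    rw [sum_filter_le_zero, sum_filter_le_zero] at h0
    have tail : ∀ k : Fin n,
        ∑ j ∈ Finset.univ.filter (fun j : Fin n => j ≤ k), (f j.succ).2
          ≤ (s + (f 0).1 - (f 0).2)
            + ∑ j ∈ Finset.univ.filter (fun j : Fin n => j ≤ k), (f j.succ).1 := by
      intro k
      have hk := h k.succ
      rw [sum_filter_le_succ, sum_filter_le_succ] at hk
      omega
    rw [List.ofFn_succ]
    show (∏ t ∈ Finset.range (f 0).2, lam (s + (f 0).1 - t)) *
        wordConst lam (List.ofFn fun j => f j.succ) (s + (f 0).1 - (f 0).2) = _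
    rw [ih (fun j => f j.succ) (s + (f 0).1 - (f 0).2) tail]
    rw [Fin.prod_univ_succ]
    congr 1
    · refine Finset.prod_congr rfl fun t _ => ?_
      congr 1
      rw [sum_filter_le_zero]
      have : Finset.univ.filter (fun j : Fin (n + 1) => j < 0) = ∅ := by
        ext j; simp
      rw [this]
      simp
    · refine Finset.prod_congr rfl fun k _ => ?_
      refine Finset.prod_congr rfl fun t _ => ?_
      congr 1
      rw [sum_filter_le_succ, sum_filter_lt_succ]
      omega

end Glue

/-- **Evaluation of an admissible word in `U` and `D` on a locally free Bratteli diagram**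
(generalization of Stanley's theorem on differential posets).
Model a Bratteli diagram by finite nonempty vertex types `V i` with `V 0` a singleton and
multiplicity matrices `M i`; let `d i` be the dimension vectors and suppose the diagram is
locally free with rank sequence `λ`. For an admissible word
`D^{e_n} U^{u_n} ⋯ D^{e_1} U^{u_1}` (all `u_k, e_k ≥ 1`, and `∑_{j≤k} e_j ≤ ∑_{j≤k} u_j` for
all `k`), applying the word to the indicator of the root yields, at level
`s = ∑ u_j − ∑ e_j`, the vector `C • d s` with
`C = ∏_{k=1}^{n} ∏_{t=0}^{e_k−1} λ( (∑_{j≤k} u_j) − (∑_{j<k} e_j) − t )`;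
that is, `⟨w0̂, α⟩ = C · d s α` for every `α : V s`. -/
theorem admissible_word_eval
    (V : ℕ → Type) [∀ i, Fintype (V i)] [∀ i, Nonempty (V i)]
    (hV0 : Subsingleton (V 0))
    (M : ∀ i, Matrix (V (i + 1)) (V i) ℕ)
    (d : ∀ i, V i → ℕ)
    (hd0 : ∀ v : V 0, d 0 v = 1)
    (hdsucc : ∀ i (α : V (i + 1)), d (i + 1) α = ∑ β : V i, M i α β * d i β)
    (lam : ℕ → ℚ)
    (hfree : ∀ i (β : V i),
      ∑ α : V (i + 1), (M i α β : ℚ) * (d (i + 1) α : ℚ) = lam (i + 1) * (d i β : ℚ))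
    (n : ℕ) (hn : 1 ≤ n) (u e : Fin n → ℕ)
    (hu : ∀ k, 1 ≤ u k) (he : ∀ k, 1 ≤ e k)
    (hadm : ∀ k : Fin n,
      ∑ j ∈ Finset.univ.filter (fun j : Fin n => j ≤ k), e j ≤
        ∑ j ∈ Finset.univ.filter (fun j : Fin n => j ≤ k), u j) :
    ∀ α : V ((∑ j, u j) - (∑ j, e j)),
      ((List.ofFn fun k : Fin n => (u k, e k)).foldl
          (fun w p => (downOp V M)^[p.2] ((upOp V M)^[p.1] w)) (rootVec V))
        ((∑ j, u j) - (∑ j, e j)) α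
      = (∏ k : Fin n, ∏ t ∈ Finset.range (e k),
          lam ((∑ j ∈ Finset.univ.filter (fun j : Fin n => j ≤ k), u j)
            - (∑ j ∈ Finset.univ.filter (fun j : Fin n => j < k), e j) - t))
        * (d ((∑ j, u j) - (∑ j, e j)) α : ℚ) := by
  
  intro α
  set f : Fin n → ℕ × ℕ := fun k => (u k, e k) with hf
  have hadm' : ∀ k : Fin n, ∑ j ∈ Finset.univ.filter (fun j : Fin n => j ≤ k), (f j).2
      ≤ 0 + ∑ j ∈ Finset.univ.filter (fun j : Fin n => j ≤ k), (f j).1 := by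
    intro k; rw [zero_add]; exact hadm k
  have hroot : Psup (V := V) d 0 1 (rootVec V) := by
    refine ⟨fun β => by simp [rootVec, hd0 β], fun i hi β => by simp [rootVec, hi]⟩
  have hmain := word_P hdsucc hfree (List.ofFn f) 0 1 (rootVec V) hroot (adm_ofFn f 0 hadm')
  have hlev : wordLevel (List.ofFn f) 0 = (∑ j, u j) - (∑ j, e j) := by
    have := level_ofFn f 0 hadm'
    simp only [hf] at this ⊢
    omega
  rw [hlev, const_ofFn lam f 0 hadm'] at hmain
  have := hmain.1 α
  simp only [hf, zero_add, one_mul] at this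
  exact this
end

section
/- Work in the Bratteli diagram of the Weyl group B_n: vertices at level j are ordered pairs of Young diagrams of total size j, with covering relation given by adding one cell to one component. For 2 ≤ i ≤ n define S(n, i) to be the sum, over all tuples (β_{n-1}, β_{i-1}, β_{i-2}, α_i, α_{i-1}) of pairs of Young diagrams at levels n−1, i−1, i−2, i, i−1 respectively satisfying β_{i-2} ⋖ β_{i-1}, β_{i-1} ⋖ α_i, β_{i-2} ⋖ α_{i-1}, and α_{i-1} ⋖ α_i, of N(β_{i-1}, β_{n-1}) · d(α_{i-1}) · d(β_{n-1}). Then 2^{i-1} · (i−1)! · S(n, i) = 2^{n-1} · (n−1)! · S(i, i); that is, S(n, i) = (|B_{n-1}| / |B_{i-1}|) · S(i, i). -/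
/-!
Pairs of Young diagrams form a 2-differential poset: a pair has exactly two more upper covers
than lower covers, and two distinct pairs of the same level have as many common upper covers
as common lower covers (at most one each, namely their join, resp. meet). Writing `d = dd`,
this gives `∑_{γ ⋗ β} d γ = 2 (m + 1) d β` for `β` at level `m`, and by iteration
`|B_m| · ∑_{γ at level k} N(β, γ) d γ = |B_k| · d β` for `m ≤ k`. In `S n i` the variable
`β_{n-1}` enters only through `N(β_{i-1}, β_{n-1}) d(β_{n-1})`; summing it out leaves
`|B_{n-1}| / |B_{i-1}|` times a quantity that does not depend on `n`, and the case `n = i`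
identifies it with `S i i`.
-/

open Finset

/-- Ordered pairs of Young diagrams: the vertices of the Bratteli diagram of the Weyl
groups `B_n`. -/
abbrev YP := YoungDiagram × YoungDiagram

/-- `ν` covers `μ`: `ν` is obtained from the Young diagram `μ` by adding exactly one cell. -/
def YDCov (μ ν : YoungDiagram) : Prop := μ ≤ ν ∧ ν.card = μ.card + 1

/-- The covering relation on ordered pairs of Young diagrams: one component is covered and
the other is unchanged. -/
def PairCov (α β : YP) : Prop :=
  (YDCov α.1 β.1 ∧ α.2 = β.2) ∨ (α.1 = β.1 ∧ YDCov α.2 β.2)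

/-- The level of a pair of Young diagrams: the total number of cells. -/
def lvl (β : YP) : ℕ := β.1.card + β.2.card

/-- The number of saturated chains of length `k` from `α` to `β` in the poset of pairs of
Young diagrams. -/
noncomputable def nchains (k : ℕ) (α β : YP) : ℕ :=
  {c : Fin (k + 1) → YP | c 0 = α ∧ c (Fin.last k) = β ∧
    ∀ j : Fin k, PairCov (c j.castSucc) (c j.succ)}.ncard

/-- `N α β`: the number of saturated chains from `α` up to `β`. -/
noncomputable def NN (α β : YP) : ℕ := nchains (lvl β - lvl α) α β

/-- `d β`: the number of saturated chains from the empty pair `(∅, ∅)` up to `β`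
(the dimension of the irreducible representation of `B_{lvl β}` labelled by `β`). -/
noncomputable def dd (β : YP) : ℕ := NN (⊥, ⊥) β


/-- The quantity `S(n, i) = #Hom(ℋᵢⁿ ↑ 𝒬; 𝓑)` for the Weyl group `B_n`: the sum over tuples
`(β_{n-1}, β_{i-1}, β_{i-2}, α_i, α_{i-1})` of pairs of Young diagrams at levels
`n-1, i-1, i-2, i, i-1` with `β_{i-2} ⋖ β_{i-1}`, `β_{i-1} ⋖ α_i`, `β_{i-2} ⋖ α_{i-1}`,
`α_{i-1} ⋖ α_i`, of `N(β_{i-1}, β_{n-1}) · d(α_{i-1}) · d(β_{n-1})`. -/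
noncomputable def S (n i : ℕ) : ℕ :=
  ∑ᶠ (βn1 : YP) (βi1 : YP) (βi2 : YP) (αi : YP) (αi1 : YP)
    (_ : lvl βn1 = n - 1) (_ : lvl βi1 = i - 1) (_ : lvl βi2 = i - 2)
    (_ : lvl αi = i) (_ : lvl αi1 = i - 1)
    (_ : PairCov βi2 βi1) (_ : PairCov βi1 αi)
    (_ : PairCov βi2 αi1) (_ : PairCov αi1 αi),
    NN βi1 βn1 * dd αi1 * dd βn1

section Chains

variable {X : Type*} (r : X → X → Prop)

def chainSet (k : ℕ) (a b : X) : Set (Fin (k + 1) → X) :=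
  {c | c 0 = a ∧ c (Fin.last k) = b ∧ ∀ j : Fin k, r (c j.castSucc) (c j.succ)}

variable {r}

lemma chainSet_zero_self (a : X) : chainSet r 0 a a = {fun _ => a} := by
  ext c
  refine ⟨fun ⟨h0, _⟩ => funext fun j => by rw [Fin.fin_one_eq_zero j, h0], ?_⟩
  rintro rfl
  exact ⟨rfl, rfl, Fin.elim0⟩

lemma chainSet_zero_of_ne {a b : X} (h : a ≠ b) : chainSet r 0 a b = ∅ :=
  Set.eq_empty_of_forall_notMem fun _ ⟨h0, hlast, _⟩ => h (h0.symm.trans hlast)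

lemma chainSet_succ (k : ℕ) (a b : X) :
    chainSet r (k + 1) a b =
      ⋃ y ∈ {y | r y b}, (fun c => Fin.snoc c b) '' chainSet r k a y := by
  ext c
  simp only [chainSet, Set.mem_iUnion, Set.mem_image, exists_prop]
  constructor
  · rintro ⟨h0, hlast, hstep⟩
    rw [Fin.forall_fin_succ'] at hstep
    refine ⟨c (Fin.last k).castSucc, by simpa [hlast] using hstep.2, Fin.init c,
      ⟨h0, rfl, fun j => ?_⟩, by rw [← hlast, Fin.snoc_init_self]⟩
    simpa only [Fin.init, Fin.succ_castSucc] using hstep.1 j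
  · rintro ⟨y, hy, d, ⟨h0, hlast, hstep⟩, rfl⟩
    refine ⟨by simpa using h0, Fin.snoc_last _ _, Fin.forall_fin_succ'.mpr ⟨fun j => ?_, ?_⟩⟩
    · simpa only [Fin.succ_castSucc, Fin.snoc_castSucc] using hstep j
    · simpa [hlast] using hy

lemma chainSet_finite (hr : ∀ b, {a | r a b}.Finite) (k : ℕ) (a b : X) :
    (chainSet r k a b).Finite := by
  induction k generalizing b with
  | zero =>
    by_cases hab : a = b
    · rw [← hab, chainSet_zero_self]; exact Set.finite_singleton _
    · rw [chainSet_zero_of_ne hab]; exact Set.finite_empty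
  | succ k ih =>
    rw [chainSet_succ]
    exact (hr b).biUnion fun y _ => (ih y).image _

lemma ncard_chainSet_succ (hr : ∀ b, {a | r a b}.Finite) (k : ℕ) (a b : X) {s : Finset X}
    (hs : ∀ y, y ∈ s ↔ r y b) :
    (chainSet r (k + 1) a b).ncard = ∑ y ∈ s, (chainSet r k a y).ncard := by
  have hsb : {y | r y b} = ↑s := by ext; simp [hs]
  rw [chainSet_succ, hsb,
    s.finite_toSet.ncard_biUnion (fun y _ => (chainSet_finite hr k a y).image _),
    finsum_mem_coe_finset]
  · exact sum_congr rfl fun y _ =>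
      Set.ncard_image_of_injective _ fun _ _ h => (Fin.snoc_injective2 h).1
  · rintro y - y' - hne
    refine Set.disjoint_left.mpr ?_
    rintro _ ⟨d, hd, rfl⟩ ⟨d', hd', h⟩
    exact hne (hd.2.1.symm.trans ((Fin.snoc_injective2 h).1 ▸ hd'.2.1))

end Chains

lemma Set.ncard_image_union_image_of_notMem {A B : Type*} {s : Set A} {t : Set B} {a : A} (b : B)
    (hs : s.Finite) (ht : t.Finite) (ha : a ∉ s) :
    ((·, b) '' s ∪ (a, ·) '' t).ncard = s.ncard + t.ncard := by
  rw [Set.ncard_union_eq ?_ (hs.image _) (ht.image _),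
    Set.ncard_image_of_injective _ (Prod.mk_left_injective b),
    Set.ncard_image_of_injective _ (Prod.mk_right_injective a)]
  refine Set.disjoint_left.mpr ?_
  rintro _ ⟨x, hx, rfl⟩ ⟨y, -, h⟩
  simp only [Prod.mk.injEq] at h
  exact ha (h.1 ▸ hx)

namespace YoungDiagram

instance : DecidableEq YoungDiagram := fun _ _ => decidable_of_iff _ YoungDiagram.ext_iff.symm

instance : DecidableLE YoungDiagram := fun _ _ => decidable_of_iff _ cells_subset_iff

instance : DecidableRel YDCov := fun _ _ => inferInstanceAs (Decidable (_ ∧ _))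

lemma eq_of_le_of_card_le {μ ν : YoungDiagram} (hle : μ ≤ ν) (hcard : ν.card ≤ μ.card) :
    μ = ν :=
  YoungDiagram.ext (eq_of_subset_of_card_le hle hcard)

lemma card_mono : Monotone YoungDiagram.card := fun _ _ h => card_le_card h

lemma finite_setOf_card_le (m : ℕ) : {μ : YoungDiagram | μ.card ≤ m}.Finite := by
  refine ((range m ×ˢ range m).powerset.finite_toSet.preimage
    fun μ _ ν _ h => YoungDiagram.ext h).subset fun μ hμ => ?_
  simp only [Set.mem_preimage, coe_powerset, Set.mem_powerset_iff, coe_subset]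
  rintro ⟨a, b⟩ hab
  have hcol : μ.colLen 0 ≤ μ.card := by
    rw [colLen_eq_card]; exact card_le_card (filter_subset _ _)
  have hrow : μ.rowLen 0 ≤ μ.card := by
    rw [rowLen_eq_card]; exact card_le_card (filter_subset _ _)
  have ha := (mem_iff_lt_colLen.mp hab).trans_le (μ.colLen_anti 0 b b.zero_le)
  have hb := (mem_iff_lt_rowLen.mp hab).trans_le (μ.rowLen_anti 0 a a.zero_le)
  have hμ : μ.card ≤ m := hμ
  simp only [mem_product, mem_range]
  omega

lemma ydCov_irrefl (μ : YoungDiagram) : ¬ YDCov μ μ := fun h => Nat.succ_ne_self _ h.2.symm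

lemma ydCov_iff_exists_insert {μ ν : YoungDiagram} :
    YDCov μ ν ↔ ∃ c ∉ μ.cells, insert c μ.cells = ν.cells := by
  rw [exists_eq_insert_iff, YDCov, ← cells_subset_iff, eq_comm]

def Addable (μ : YoungDiagram) (i : ℕ) : Prop := ∀ i' < i, μ.rowLen i < μ.rowLen i'

def Removable (μ : YoungDiagram) (i : ℕ) : Prop := μ.rowLen (i + 1) < μ.rowLen i

variable {μ : YoungDiagram} {i : ℕ}

lemma addable_zero (μ : YoungDiagram) : μ.Addable 0 := fun _ h => absurd h (Nat.not_lt_zero _)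

lemma addable_succ_iff : μ.Addable (i + 1) ↔ μ.Removable i :=
  ⟨fun h => h i i.lt_succ_self,
    fun h i' hi' => h.trans_le (μ.rowLen_anti i' i (Nat.lt_succ_iff.mp hi'))⟩

lemma mk_rowLen_notMem (μ : YoungDiagram) (i : ℕ) : (i, μ.rowLen i) ∉ μ := by
  simp [mem_iff_lt_rowLen]

lemma Removable.mk_rowLen_pred_mem (h : μ.Removable i) : (i, μ.rowLen i - 1) ∈ μ :=
  mem_iff_lt_rowLen.mpr (by unfold Removable at h; omega)

lemma Removable.lt_colLen (h : μ.Removable i) : i < μ.colLen 0 :=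
  mem_iff_lt_colLen.mp (mem_iff_lt_rowLen.mpr (Nat.zero_le _ |>.trans_lt h))

lemma Addable.isLowerSet_insert (h : μ.Addable i) :
    IsLowerSet (↑(insert (i, μ.rowLen i) μ.cells) : Set (ℕ × ℕ)) := by
  rintro ⟨c, d⟩ ⟨a, b⟩ hle hcd
  obtain ⟨hac, hbd⟩ : a ≤ c ∧ b ≤ d := hle
  simp only [coe_insert, Set.mem_insert_iff, mem_coe, mem_cells, Prod.mk.injEq] at hcd ⊢
  rcases hcd with ⟨rfl, rfl⟩ | hcd
  · rcases hac.lt_or_eq with hlt | rfl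
    · exact .inr (mem_iff_lt_rowLen.mpr (hbd.trans_lt (h a hlt)))
    · rcases hbd.lt_or_eq with hlt | hb
      · exact .inr (mem_iff_lt_rowLen.mpr hlt)
      · exact .inl ⟨rfl, hb⟩
  · exact .inr (μ.up_left_mem hac hbd hcd)

lemma Removable.isLowerSet_erase (h : μ.Removable i) :
    IsLowerSet (↑(μ.cells.erase (i, μ.rowLen i - 1)) : Set (ℕ × ℕ)) := by
  rintro ⟨c, d⟩ ⟨a, b⟩ hle hcd
  obtain ⟨hac, hbd⟩ : a ≤ c ∧ b ≤ d := hle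
  simp only [coe_erase, Set.mem_sdiff, mem_coe, mem_cells, Set.mem_singleton_iff,
    Prod.mk.injEq] at hcd ⊢
  refine ⟨μ.up_left_mem hac hbd hcd.1, fun ⟨ha, hb⟩ => ?_⟩
  subst ha
  replace hb : b = μ.rowLen a - 1 := hb
  have hd : d < μ.rowLen c := mem_iff_lt_rowLen.mp hcd.1
  rcases hac.lt_or_eq with hlt | rfl
  · have := μ.rowLen_anti (a + 1) c hlt
    unfold Removable at h
    omega
  · exact hcd.2 ⟨rfl, by omega⟩

open Classical in
noncomputable def addCell (μ : YoungDiagram) (i : ℕ) : YoungDiagram :=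
  if h : μ.Addable i then ⟨_, h.isLowerSet_insert⟩ else μ

open Classical in
noncomputable def removeCell (μ : YoungDiagram) (i : ℕ) : YoungDiagram :=
  if h : μ.Removable i then ⟨_, h.isLowerSet_erase⟩ else μ

lemma Addable.cells_addCell (h : μ.Addable i) :
    (μ.addCell i).cells = insert (i, μ.rowLen i) μ.cells := by
  rw [addCell, dif_pos h]

lemma Removable.cells_removeCell (h : μ.Removable i) :
    (μ.removeCell i).cells = μ.cells.erase (i, μ.rowLen i - 1) := by
  rw [removeCell, dif_pos h]

lemma ydCov_iff_exists_addCell {ν : YoungDiagram} :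
    YDCov μ ν ↔ ∃ i, μ.Addable i ∧ μ.addCell i = ν := by
  rw [ydCov_iff_exists_insert]
  constructor
  · rintro ⟨⟨i, j⟩, hc, hν⟩
    have hij : (i, j) ∈ ν := by rw [← mem_cells, ← hν]; exact mem_insert_self _ _
    have hnew : ∀ p ∈ ν, p ∉ μ → p = (i, j) := fun p hp hpμ => by
      rw [← mem_cells, ← hν, mem_insert] at hp
      exact hp.resolve_right hpμ
    have hj : j = μ.rowLen i := by
      have hle : μ.rowLen i ≤ j := not_lt.mp fun h => hc (mem_iff_lt_rowLen.mpr h)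
      exact (Prod.ext_iff.mp (hnew _ (ν.up_left_mem le_rfl hle hij) (mk_rowLen_notMem μ i))).2.symm
    subst hj
    have hadd : μ.Addable i := fun i' hi' => by
      by_contra hnot
      have hmem := ν.up_left_mem hi'.le le_rfl hij
      exact hi'.ne (Prod.ext_iff.mp (hnew _ hmem fun h => hnot (mem_iff_lt_rowLen.mp h))).1
    exact ⟨i, hadd, YoungDiagram.ext (by rw [hadd.cells_addCell, hν])⟩
  · rintro ⟨i, h, rfl⟩
    exact ⟨_, mk_rowLen_notMem μ i, h.cells_addCell.symm⟩

lemma ydCov_iff_exists_removeCell {ρ : YoungDiagram} :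
    YDCov ρ μ ↔ ∃ i, μ.Removable i ∧ μ.removeCell i = ρ := by
  rw [ydCov_iff_exists_insert]
  constructor
  · rintro ⟨⟨i, j⟩, hc, hμ⟩
    have hcorner : ∀ p ∈ μ, (i, j) ≤ p → p = (i, j) := fun p hp hle => by
      rw [← mem_cells, ← hμ, mem_insert] at hp
      exact hp.resolve_right fun hpρ => hc (ρ.isLowerSet hle hpρ)
    have hij : (i, j) ∈ μ := by rw [← mem_cells, ← hμ]; exact mem_insert_self _ _
    have hj : j + 1 = μ.rowLen i := by
      refine le_antisymm (mem_iff_lt_rowLen.mp hij) (not_lt.mp fun h => ?_)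
      have := hcorner _ (mem_iff_lt_rowLen.mpr h) ⟨le_rfl, j.le_succ⟩
      simp at this
    have hrem : μ.Removable i := by
      refine (not_le.mp fun h => ?_).trans_le hj.le
      have := hcorner _ (mem_iff_lt_rowLen.mpr (Nat.lt_of_succ_le h)) ⟨i.le_succ, le_rfl⟩
      simp at this
    refine ⟨i, hrem, YoungDiagram.ext ?_⟩
    rw [hrem.cells_removeCell, ← hμ, ← hj, Nat.add_sub_cancel, erase_insert hc]
  · rintro ⟨i, h, rfl⟩
    refine ⟨(i, μ.rowLen i - 1), by simp [h.cells_removeCell], ?_⟩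
    rw [h.cells_removeCell, insert_erase h.mk_rowLen_pred_mem]

lemma injOn_addCell : Set.InjOn μ.addCell {i | μ.Addable i} := by
  intro i hi j hj hij
  have hmem : (i, μ.rowLen i) ∈ (μ.addCell j).cells := by
    rw [← hij, Addable.cells_addCell hi]; exact mem_insert_self _ _
  rw [Addable.cells_addCell hj, mem_insert] at hmem
  exact (Prod.ext_iff.mp (hmem.resolve_right (mk_rowLen_notMem μ i))).1

lemma injOn_removeCell : Set.InjOn μ.removeCell {i | μ.Removable i} := by
  intro i hi j hj hij
  have hnot : (i, μ.rowLen i - 1) ∉ (μ.removeCell j).cells := by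
    rw [← hij, Removable.cells_removeCell hi]; exact notMem_erase _ _
  rw [Removable.cells_removeCell hj, mem_erase, not_and] at hnot
  by_contra hne
  exact hnot (fun h => hne (Prod.ext_iff.mp h).1) hi.mk_rowLen_pred_mem

lemma setOf_ydCov_eq_image_addCell : {ν | YDCov μ ν} = μ.addCell '' {i | μ.Addable i} := by
  ext ν; simp [ydCov_iff_exists_addCell]

lemma setOf_ydCov_eq_image_removeCell : {ρ | YDCov ρ μ} = μ.removeCell '' {i | μ.Removable i} := by
  ext ρ; simp [ydCov_iff_exists_removeCell]

lemma finite_setOf_removable (μ : YoungDiagram) : {i | μ.Removable i}.Finite :=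
  (Set.finite_Iio _).subset fun _ h => Removable.lt_colLen h

lemma setOf_addable_eq (μ : YoungDiagram) :
    {i | μ.Addable i} = insert 0 (Nat.succ '' {i | μ.Removable i}) := by
  ext (_ | i) <;> simp [addable_zero, addable_succ_iff]

lemma finite_setOf_ydCov_right (μ : YoungDiagram) : {ν | YDCov μ ν}.Finite := by
  rw [setOf_ydCov_eq_image_addCell, setOf_addable_eq]
  exact (((finite_setOf_removable μ).image _).insert 0).image _

lemma finite_setOf_ydCov_left (μ : YoungDiagram) : {ρ | YDCov ρ μ}.Finite := by
  rw [setOf_ydCov_eq_image_removeCell]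
  exact (finite_setOf_removable μ).image _

theorem ncard_setOf_ydCov (μ : YoungDiagram) :
    {ν | YDCov μ ν}.ncard = {ρ | YDCov ρ μ}.ncard + 1 := by
  rw [setOf_ydCov_eq_image_addCell, setOf_ydCov_eq_image_removeCell,
    injOn_addCell.ncard_image, injOn_removeCell.ncard_image,
    setOf_addable_eq, Set.ncard_insert_of_notMem (by simp) ((finite_setOf_removable μ).image _),
    Set.ncard_image_of_injective _ Nat.succ_injective]

end YoungDiagram

instance : DecidableRel PairCov := fun _ _ => inferInstanceAs (Decidable (_ ∨ _))

lemma lvl_bot : lvl (⊥, ⊥) = 0 := by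
  simp [lvl, YoungDiagram.cells_bot]

lemma lvl_mono : Monotone lvl := fun _ _ h =>
  add_le_add (YoungDiagram.card_mono h.1) (YoungDiagram.card_mono h.2)

lemma eq_of_le_of_lvl_le {α β : YP} (hle : α ≤ β) (hl : lvl β ≤ lvl α) : α = β := by
  have h1 := YoungDiagram.card_mono hle.1
  have h2 := YoungDiagram.card_mono hle.2
  unfold lvl at hl
  exact Prod.ext (YoungDiagram.eq_of_le_of_card_le hle.1 (by omega))
    (YoungDiagram.eq_of_le_of_card_le hle.2 (by omega))

lemma pairCov_iff {α β : YP} : PairCov α β ↔ α ≤ β ∧ lvl β = lvl α + 1 := by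
  constructor
  · rintro (⟨⟨h1, hc⟩, h2⟩ | ⟨h1, ⟨h2, hc⟩⟩)
    · exact ⟨⟨h1, h2.le⟩, by simp only [lvl, hc, h2]; ring⟩
    · exact ⟨⟨h1.le, h2⟩, by simp only [lvl, hc, h1]; ring⟩
  · rintro ⟨hle, hl⟩
    have h1 := YoungDiagram.card_mono hle.1
    have h2 := YoungDiagram.card_mono hle.2
    unfold lvl at hl
    rcases lt_or_ge α.1.card β.1.card with hlt | hge
    · exact .inl ⟨⟨hle.1, by omega⟩, YoungDiagram.eq_of_le_of_card_le hle.2 (by omega)⟩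
    · exact .inr ⟨YoungDiagram.eq_of_le_of_card_le hle.1 hge, hle.2, by omega⟩

lemma PairCov.lvl_eq {α β : YP} (h : PairCov α β) : lvl β = lvl α + 1 := (pairCov_iff.mp h).2

lemma lvl_sup_add_lvl_inf (β β' : YP) : lvl (β ⊔ β') + lvl (β ⊓ β') = lvl β + lvl β' := by
  simp only [lvl, Prod.fst_sup, Prod.snd_sup, Prod.fst_inf, Prod.snd_inf, YoungDiagram.card,
    YoungDiagram.cells_sup, YoungDiagram.cells_inf]
  have := card_union_add_card_inter β.1.cells β'.1.cells
  have := card_union_add_card_inter β.2.cells β'.2.cells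
  omega

lemma finite_setOf_lvl_eq (m : ℕ) : {β : YP | lvl β = m}.Finite :=
  ((YoungDiagram.finite_setOf_card_le m).prod (YoungDiagram.finite_setOf_card_le m)).subset
    fun β (hβ : lvl β = m) => by
      unfold lvl at hβ; exact ⟨show β.1.card ≤ m by omega, show β.2.card ≤ m by omega⟩

noncomputable def level (m : ℕ) : Finset YP := (finite_setOf_lvl_eq m).toFinset

@[simp] lemma mem_level {m : ℕ} {β : YP} : β ∈ level m ↔ lvl β = m := Set.Finite.mem_toFinset _

noncomputable def upCovers (β : YP) : Finset YP := {γ ∈ level (lvl β + 1) | PairCov β γ}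

noncomputable def downCovers (β : YP) : Finset YP := {δ ∈ level (lvl β - 1) | PairCov δ β}

@[simp] lemma mem_upCovers {β γ : YP} : γ ∈ upCovers β ↔ PairCov β γ := by
  simp only [upCovers, mem_filter, mem_level, and_iff_right_iff_imp]
  exact PairCov.lvl_eq

@[simp] lemma mem_downCovers {β δ : YP} : δ ∈ downCovers β ↔ PairCov δ β := by
  simp only [downCovers, mem_filter, mem_level, and_iff_right_iff_imp]
  exact fun h => by rw [h.lvl_eq, Nat.add_sub_cancel]

lemma coe_upCovers (β : YP) : (upCovers β : Set YP) =
    (·, β.2) '' {ν | YDCov β.1 ν} ∪ (β.1, ·) '' {ν | YDCov β.2 ν} := by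
  ext ⟨γ₁, γ₂⟩
  simp [PairCov, eq_comm, and_comm]

lemma coe_downCovers (β : YP) : (downCovers β : Set YP) =
    (·, β.2) '' {ν | YDCov ν β.1} ∪ (β.1, ·) '' {ν | YDCov ν β.2} := by
  ext ⟨δ₁, δ₂⟩
  simp [PairCov, eq_comm, and_comm]

theorem card_upCovers (β : YP) : #(upCovers β) = #(downCovers β) + 2 := by
  rw [← Set.ncard_coe_finset, ← Set.ncard_coe_finset, coe_upCovers, coe_downCovers,
    Set.ncard_image_union_image_of_notMem _ (YoungDiagram.finite_setOf_ydCov_right _)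
      (YoungDiagram.finite_setOf_ydCov_right _) (YoungDiagram.ydCov_irrefl _),
    Set.ncard_image_union_image_of_notMem _ (YoungDiagram.finite_setOf_ydCov_left _)
      (YoungDiagram.finite_setOf_ydCov_left _) (YoungDiagram.ydCov_irrefl _),
    YoungDiagram.ncard_setOf_ydCov, YoungDiagram.ncard_setOf_ydCov]
  ring

theorem card_upCovers_inter_of_ne {β β' : YP} (hne : β ≠ β') (hl : lvl β = lvl β') :
    #(upCovers β ∩ upCovers β') = #(downCovers β ∩ downCovers β') := by
  have hsum := lvl_sup_add_lvl_inf β β'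
  have hsup : lvl β + 1 ≤ lvl (β ⊔ β') := by
    by_contra! h
    exact hne ((eq_of_le_of_lvl_le le_sup_left (by omega)).trans
      (eq_of_le_of_lvl_le le_sup_right (by omega)).symm)
  have hup : upCovers β ∩ upCovers β' = {γ ∈ ({β ⊔ β'} : Finset YP) | lvl γ = lvl β + 1} := by
    ext γ
    simp only [mem_inter, mem_upCovers, pairCov_iff, mem_filter, mem_singleton]
    constructor
    · rintro ⟨⟨h1, hγ⟩, h2, -⟩
      exact ⟨(eq_of_le_of_lvl_le (sup_le h1 h2) (by omega)).symm, hγ⟩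
    · rintro ⟨rfl, hγ⟩
      exact ⟨⟨le_sup_left, hγ⟩, le_sup_right, by omega⟩
  have hdown : downCovers β ∩ downCovers β' = {δ ∈ ({β ⊓ β'} : Finset YP) | lvl β = lvl δ + 1} := by
    ext δ
    simp only [mem_inter, mem_downCovers, pairCov_iff, mem_filter, mem_singleton]
    constructor
    · rintro ⟨⟨h1, hδ⟩, h2, -⟩
      have := lvl_mono (le_inf h1 h2)
      exact ⟨eq_of_le_of_lvl_le (le_inf h1 h2) (by omega), hδ⟩
    · rintro ⟨rfl, hδ⟩
      exact ⟨⟨inf_le_left, hδ⟩, inf_le_right, by omega⟩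
  rw [hup, hdown, filter_singleton, filter_singleton]
  by_cases h : lvl (β ⊔ β') = lvl β + 1
  · rw [if_pos h, if_pos (by omega), card_singleton, card_singleton]
  · rw [if_neg h, if_neg (by omega)]

lemma finite_setOf_pairCov (β : YP) : {α | PairCov α β}.Finite :=
  (finite_setOf_lvl_eq (lvl β - 1)).subset fun α (h : PairCov α β) => by
    show lvl α = lvl β - 1
    rw [h.lvl_eq, Nat.add_sub_cancel]

lemma nchains_eq_ncard_chainSet (k : ℕ) (α β : YP) :
    nchains k α β = (chainSet PairCov k α β).ncard := rfl

lemma nchains_zero_self (β : YP) : nchains 0 β β = 1 := by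
  rw [nchains_eq_ncard_chainSet, chainSet_zero_self, Set.ncard_singleton]

lemma nchains_zero_of_ne {α β : YP} (h : α ≠ β) : nchains 0 α β = 0 := by
  rw [nchains_eq_ncard_chainSet, chainSet_zero_of_ne h, Set.ncard_empty]

lemma nchains_succ (k : ℕ) (α β : YP) :
    nchains (k + 1) α β = ∑ δ ∈ downCovers β, nchains k α δ := by
  simp only [nchains_eq_ncard_chainSet]
  exact ncard_chainSet_succ finite_setOf_pairCov k α β fun _ => mem_downCovers

lemma dd_eq_nchains (β : YP) : dd β = nchains (lvl β) (⊥, ⊥) β := by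
  rw [dd, NN, lvl_bot, Nat.sub_zero]

lemma dd_eq_sum_downCovers {β : YP} (h : 0 < lvl β) : dd β = ∑ δ ∈ downCovers β, dd δ := by
  rw [dd_eq_nchains, ← Nat.succ_pred_eq_of_pos h, nchains_succ]
  refine sum_congr rfl fun δ hδ => ?_
  rw [dd_eq_nchains, (mem_downCovers.mp hδ).lvl_eq, Nat.pred_succ]

lemma sum_level_succ_sum_downCovers (m : ℕ) (g : YP → YP → ℕ) :
    ∑ γ ∈ level (m + 1), ∑ δ ∈ downCovers γ, g γ δ =
      ∑ δ ∈ level m, ∑ γ ∈ upCovers δ, g γ δ :=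
  sum_comm' fun γ δ => by
    simp only [mem_level, mem_downCovers, mem_upCovers]
    exact ⟨fun ⟨h1, h2⟩ => ⟨h2, by have := h2.lvl_eq; omega⟩,
      fun ⟨h1, h2⟩ => ⟨by rw [h1.lvl_eq, h2], h1⟩⟩

lemma sum_upCovers_sum_downCovers (β : YP) (f : YP → ℕ) :
    ∑ γ ∈ upCovers β, ∑ β' ∈ downCovers γ, f β' =
      ∑ β' ∈ level (lvl β), #(upCovers β ∩ upCovers β') * f β' := by
  simp_rw [← smul_eq_mul, ← sum_const]
  exact sum_comm' fun γ β' => by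
    simp only [mem_upCovers, mem_downCovers, mem_inter, mem_level]
    exact ⟨fun ⟨h1, h2⟩ => ⟨⟨h1, h2⟩, by have := h1.lvl_eq; have := h2.lvl_eq; omega⟩,
      fun ⟨h, _⟩ => h⟩

lemma sum_downCovers_sum_upCovers (β : YP) (f : YP → ℕ) :
    ∑ δ ∈ downCovers β, ∑ β' ∈ upCovers δ, f β' =
      ∑ β' ∈ level (lvl β), #(downCovers β ∩ downCovers β') * f β' := by
  simp_rw [← smul_eq_mul, ← sum_const]
  exact sum_comm' fun δ β' => by
    simp only [mem_upCovers, mem_downCovers, mem_inter, mem_level]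
    exact ⟨fun ⟨h1, h2⟩ => ⟨⟨h1, h2⟩, by have := h1.lvl_eq; have := h2.lvl_eq; omega⟩,
      fun ⟨h, _⟩ => h⟩

theorem sum_upCovers_dd (β : YP) : ∑ γ ∈ upCovers β, dd γ = 2 * (lvl β + 1) * dd β := by
  induction hm : lvl β using Nat.strong_induction_on generalizing β with
  | _ m ih =>
  have hcommon : ∀ β' ∈ (level m).erase β,
      #(upCovers β ∩ upCovers β') * dd β' = #(downCovers β ∩ downCovers β') * dd β' :=
    fun β' hβ' => by
      rw [mem_erase, mem_level] at hβ'
      rw [card_upCovers_inter_of_ne (Ne.symm hβ'.1) (hm.trans hβ'.2.symm)]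
  have hdown : ∀ δ ∈ downCovers β, ∑ γ ∈ upCovers δ, dd γ = 2 * m * dd δ := fun δ hδ => by
    have hδ := (mem_downCovers.mp hδ).lvl_eq
    rw [ih (lvl δ) (by omega) δ rfl]
    congr 2
    omega
  calc ∑ γ ∈ upCovers β, dd γ
      = ∑ γ ∈ upCovers β, ∑ β' ∈ downCovers γ, dd β' :=
        sum_congr rfl fun γ hγ => dd_eq_sum_downCovers (by rw [(mem_upCovers.mp hγ).lvl_eq]; omega)
    _ = ∑ β' ∈ level m, #(upCovers β ∩ upCovers β') * dd β' := by
        rw [sum_upCovers_sum_downCovers, hm]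
    _ = ∑ β' ∈ level m, #(downCovers β ∩ downCovers β') * dd β' + 2 * dd β := by
        rw [← add_sum_erase _ _ (mem_level.mpr hm), ← add_sum_erase _ _ (mem_level.mpr hm),
          sum_congr rfl hcommon, inter_self, inter_self, card_upCovers]
        ring
    _ = ∑ δ ∈ downCovers β, ∑ γ ∈ upCovers δ, dd γ + 2 * dd β := by
        rw [sum_downCovers_sum_upCovers, hm]
    _ = 2 * m * ∑ δ ∈ downCovers β, dd δ + 2 * dd β := by
        rw [sum_congr rfl hdown, mul_sum]
    _ = 2 * (m + 1) * dd β := by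
        rcases m.eq_zero_or_pos with rfl | hpos
        · ring
        · rw [← dd_eq_sum_downCovers (hm ▸ hpos)]
          ring

theorem sum_level_nchains_mul_dd (β : YP) (t : ℕ) :
    2 ^ lvl β * (lvl β).factorial * ∑ γ ∈ level (lvl β + t), nchains t β γ * dd γ =
      2 ^ (lvl β + t) * (lvl β + t).factorial * dd β := by
  induction t with
  | zero =>
    rw [Nat.add_zero, sum_eq_single_of_mem β (mem_level.mpr rfl) fun γ _ hγ => ?_,
      nchains_zero_self, one_mul]
    rw [nchains_zero_of_ne (Ne.symm hγ), zero_mul]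
  | succ t ih =>
    have hstep : ∑ γ ∈ level (lvl β + (t + 1)), nchains (t + 1) β γ * dd γ =
        2 * (lvl β + t + 1) * ∑ δ ∈ level (lvl β + t), nchains t β δ * dd δ := by
      simp_rw [nchains_succ, sum_mul]
      rw [← add_assoc, sum_level_succ_sum_downCovers, mul_sum]
      refine sum_congr rfl fun δ hδ => ?_
      rw [← mul_sum, sum_upCovers_dd, mem_level.mp hδ]
      ring
    rw [hstep, ← add_assoc, pow_succ, Nat.factorial_succ]
    linear_combination (2 * (lvl β + t + 1)) * ih

theorem sum_level_NN_mul_dd {β : YP} {k : ℕ} (h : lvl β ≤ k) :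
    2 ^ lvl β * (lvl β).factorial * ∑ γ ∈ level k, NN β γ * dd γ =
      2 ^ k * k.factorial * dd β := by
  obtain ⟨t, rfl⟩ := Nat.exists_eq_add_of_le h
  rw [← sum_level_nchains_mul_dd β t]
  congr 1
  refine sum_congr rfl fun γ hγ => ?_
  rw [NN, mem_level.mp hγ, Nat.add_sub_cancel_left]

lemma finsum_eq_sum_level {m : ℕ} {f : YP → ℕ} (hf : ∀ β, lvl β ≠ m → f β = 0) :
    ∑ᶠ β, f β = ∑ β ∈ level m, f β :=
  finsum_eq_finsetSum_of_support_subset f fun (β : YP) (hβ : f β ≠ 0) =>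
    mem_coe.mpr (mem_level.mpr (not_imp_comm.mp (hf β) hβ))

noncomputable def diamondWeight (i : ℕ) (β : YP) : ℕ :=
  ∑ β' ∈ level (i - 2), ∑ α ∈ level i, ∑ α' ∈ level (i - 1),
    if PairCov β' β ∧ PairCov β α ∧ PairCov β' α' ∧ PairCov α' α then dd α' else 0

lemma S_eq_sum_level (n i : ℕ) : S n i =
    ∑ γ ∈ level (n - 1), ∑ β ∈ level (i - 1), ∑ β' ∈ level (i - 2), ∑ α ∈ level i,
      ∑ α' ∈ level (i - 1), if PairCov β' β ∧ PairCov β α ∧ PairCov β' α' ∧ PairCov α' α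
        then NN β γ * dd α' * dd γ else 0 := by
  unfold S
  simp only [finsum_eq_if, ← ite_and]
  rw [finsum_eq_sum_level (m := n - 1)]
  refine sum_congr rfl fun γ hγ => ?_
  rw [finsum_eq_sum_level (m := i - 1)]
  refine sum_congr rfl fun β hβ => ?_
  rw [finsum_eq_sum_level (m := i - 2)]
  refine sum_congr rfl fun β' hβ' => ?_
  rw [finsum_eq_sum_level (m := i)]
  refine sum_congr rfl fun α hα => ?_
  rw [finsum_eq_sum_level (m := i - 1)]
  refine sum_congr rfl fun α' hα' => ?_
  · simp only [mem_level.mp hγ, mem_level.mp hβ, mem_level.mp hβ', mem_level.mp hα,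
      mem_level.mp hα', true_and]
  all_goals intro _ h; simp [h]

lemma S_eq_sum_diamondWeight (n i : ℕ) :
    S n i = ∑ β ∈ level (i - 1), diamondWeight i β * ∑ γ ∈ level (n - 1), NN β γ * dd γ := by
  rw [S_eq_sum_level, sum_comm]
  refine sum_congr rfl fun β _ => ?_
  simp only [diamondWeight, sum_mul, mul_sum]
  refine sum_congr rfl fun γ _ => sum_congr rfl fun β' _ => sum_congr rfl fun α _ =>
    sum_congr rfl fun α' _ => ?_
  split_ifs <;> ring

lemma two_pow_mul_factorial_mul_S (n i : ℕ) (hin : i ≤ n) :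
    2 ^ (i - 1) * (i - 1).factorial * S n i =
      2 ^ (n - 1) * (n - 1).factorial * ∑ β ∈ level (i - 1), diamondWeight i β * dd β := by
  rw [S_eq_sum_diamondWeight, mul_sum, mul_sum]
  refine sum_congr rfl fun β hβ => ?_
  have hβ := mem_level.mp hβ
  rw [mul_left_comm, ← hβ, sum_level_NN_mul_dd (by omega)]
  ring

theorem hom_H_reduction_general (n i : ℕ) (hin : i ≤ n) :
    2 ^ (i - 1) * (i - 1).factorial * S n i = 2 ^ (n - 1) * (n - 1).factorial * S i i := by
  have hSii := Nat.eq_of_mul_eq_mul_left (by positivity) (two_pow_mul_factorial_mul_S i i le_rfl)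
  rw [two_pow_mul_factorial_mul_S n i hin, hSii]

/-- **Reduction `#Hom(ℋᵢⁿ ↑ 𝒬; 𝓑) = (|B_{n-1}| / |B_{i-1}|) · #Hom(ℋᵢⁱ ↑ 𝒬; 𝓑)`** for the
Weyl group `B_n`: `2^{i-1} (i-1)! · S(n, i) = 2^{n-1} (n-1)! · S(i, i)`, i.e.
`S(n, i) = (|B_{n-1}| / |B_{i-1}|) · S(i, i)`. -/
theorem hom_H_reduction (n i : ℕ) (h2 : 2 ≤ i) (hin : i ≤ n) :
    2 ^ (i - 1) * (i - 1).factorial * S n i = 2 ^ (n - 1) * (n - 1).factorial * S i i :=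
  hom_H_reduction_general n i hin
end

section
/- Work in the Bratteli diagram of the Weyl group B_n: vertices at level j are ordered pairs of Young diagrams of total size j, with covering relation given by adding one cell to one component. For 2 ≤ i ≤ n let S(n, i) be the sum, over all tuples (β_{n-1}, β_{i-1}, β_{i-2}, α_i, α_{i-1}) of pairs of Young diagrams at levels n−1, i−1, i−2, i, i−1 respectively satisfying β_{i-2} ⋖ β_{i-1}, β_{i-1} ⋖ α_i, β_{i-2} ⋖ α_{i-1}, and α_{i-1} ⋖ α_i, of N(β_{i-1}, β_{n-1}) · d(α_{i-1}) · d(β_{n-1}). Then n · S(n, i) ≤ 4(i−1) · 2^n · n!; that is, S(n, i) ≤ (4(i−1)/n) · |B_n|. -/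
open Finset

namespace Aux

open scoped Classical

lemma yd_ext {μ ν : YoungDiagram} (h : μ.cells = ν.cells) : μ = ν := by
  cases μ; cases ν; simpa using h

lemma yd_eq_of_le_card {μ ν : YoungDiagram} (h : μ ≤ ν) (hc : ν.card ≤ μ.card) : μ = ν :=
  yd_ext (Finset.eq_of_subset_of_card_le (YoungDiagram.cells_subset_iff.2 h) hc)

lemma card_mono {μ ν : YoungDiagram} (h : μ ≤ ν) : μ.card ≤ ν.card :=
  Finset.card_le_card (YoungDiagram.cells_subset_iff.2 h)

lemma pairCov_lvl {α β : YP} (h : PairCov α β) : lvl β = lvl α + 1 := by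
  rcases h with ⟨⟨_, h1⟩, h2⟩ | ⟨h1, _, h2⟩ <;> simp [lvl, h1, h2] <;> omega

lemma pairCov_iff {α β : YP} :
    PairCov α β ↔ α.1 ≤ β.1 ∧ α.2 ≤ β.2 ∧ lvl β = lvl α + 1 := by
  constructor
  · rintro (⟨⟨hle, h1⟩, h2⟩ | ⟨h1, hle, h2⟩)
    · exact ⟨hle, le_of_eq h2, by simp [lvl, h1, ← h2]; omega⟩
    · exact ⟨le_of_eq h1, hle, by simp [lvl, ← h1, h2]; omega⟩
  · rintro ⟨h1, h2, hl⟩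
    have c1 := card_mono h1
    have c2 := card_mono h2
    simp only [lvl] at hl
    rcases Nat.lt_or_ge β.1.card (α.1.card + 1) with hc | hc
    · right
      have e1 : α.1 = β.1 := yd_eq_of_le_card h1 (by omega)
      exact ⟨e1, h2, by omega⟩
    · left
      have e2 : α.2 = β.2 := yd_eq_of_le_card h2 (by omega)
      exact ⟨⟨h1, by omega⟩, e2⟩

lemma card_eq_zero {μ : YoungDiagram} (h : μ.card = 0) : μ = ⊥ := by
  apply yd_ext
  simpa [YoungDiagram.card, Finset.card_eq_zero] using h

lemma lvl_eq_zero {β : YP} (h : lvl β = 0) : β = (⊥, ⊥) := by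
  have h1 : β.1 = ⊥ := card_eq_zero (by unfold lvl at h; omega)
  have h2 : β.2 = ⊥ := card_eq_zero (by unfold lvl at h; omega)
  exact Prod.ext h1 h2

lemma lvl_bot : lvl (⊥, ⊥) = 0 := by
  simp [lvl, YoungDiagram.card, YoungDiagram.cells_bot]

/-- cells of a Young diagram of card ≤ k lie in range k ×ˢ range k -/
lemma cells_subset {μ : YoungDiagram} {k : ℕ} (h : μ.card ≤ k) :
    μ.cells ⊆ Finset.range k ×ˢ Finset.range k := by
  intro c hc
  have hc' : c ∈ μ := hc
  obtain ⟨a, b⟩ := c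
  have h1 : ((Finset.range (a+1)).image (fun x => (x, 0))) ⊆ μ.cells := by
    intro x hx
    simp only [Finset.mem_image, Finset.mem_range] at hx
    obtain ⟨y, hy, rfl⟩ := hx
    exact μ.up_left_mem (by omega) (by omega) hc'
  have h2 : ((Finset.range (b+1)).image (fun x => (0, x))) ⊆ μ.cells := by
    intro x hx
    simp only [Finset.mem_image, Finset.mem_range] at hx
    obtain ⟨y, hy, rfl⟩ := hx
    exact μ.up_left_mem (by omega) (by omega) hc'
  have c1 := Finset.card_le_card h1
  have c2 := Finset.card_le_card h2
  rw [Finset.card_image_of_injective _ (fun x y h => by simpa using h)] at c1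
  rw [Finset.card_image_of_injective _ (fun x y h => by simpa using h)] at c2
  simp only [Finset.card_range] at c1 c2
  simp only [Finset.mem_product, Finset.mem_range]
  unfold YoungDiagram.card at h
  omega

lemma yd_card_finite (k : ℕ) : {μ : YoungDiagram | μ.card ≤ k}.Finite := by
  have hsub : {μ : YoungDiagram | μ.card ≤ k} ⊆
      YoungDiagram.cells ⁻¹' ((((Finset.range k ×ˢ Finset.range k).powerset :
        Finset (Finset (ℕ × ℕ)))) : Set (Finset (ℕ × ℕ))) := by
    intro μ hμ
    simp only [Set.mem_preimage, Finset.mem_coe, Finset.mem_powerset, Set.mem_setOf_eq] at *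
    exact cells_subset hμ
  refine Set.Finite.subset (Set.Finite.preimage ?_ (Finset.finite_toSet _)) hsub
  exact fun a _ b _ h => yd_ext h

lemma lvl_finite (m : ℕ) : {β : YP | lvl β = m}.Finite := by
  have : {β : YP | lvl β = m} ⊆
      {μ : YoungDiagram | μ.card ≤ m} ×ˢ {μ : YoungDiagram | μ.card ≤ m} := by
    rintro ⟨μ, ν⟩ h
    simp only [Set.mem_setOf_eq] at h
    unfold lvl at h
    simp only [Set.mem_prod, Set.mem_setOf_eq] at *
    omega
  exact Set.Finite.subset (Set.Finite.prod (yd_card_finite m) (yd_card_finite m)) this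

noncomputable def L (m : ℕ) : Finset YP := (lvl_finite m).toFinset

lemma mem_L {m : ℕ} {β : YP} : β ∈ L m ↔ lvl β = m := by
  simp [L]

lemma L_zero : L 0 = {(⊥, ⊥)} := by
  ext β
  simp only [mem_L, Finset.mem_singleton]
  exact ⟨lvl_eq_zero, fun h => h ▸ lvl_bot⟩

end Aux

namespace Aux

open scoped Classical

def chainSet (k : ℕ) (α β : YP) : Set (Fin (k + 1) → YP) :=
  {c : Fin (k + 1) → YP | c 0 = α ∧ c (Fin.last k) = β ∧
    ∀ j : Fin k, PairCov (c j.castSucc) (c j.succ)}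

lemma nchains_def (k : ℕ) (α β : YP) : nchains k α β = (chainSet k α β).ncard := rfl

lemma chainSet_zero_self (α : YP) : chainSet 0 α α = {fun _ => α} := by
  ext c
  simp only [chainSet, Set.mem_setOf_eq, Set.mem_singleton_iff]
  constructor
  · rintro ⟨h0, -, -⟩
    funext j
    have : j = 0 := Fin.fin_one_eq_zero j
    rw [this, h0]
  · rintro rfl
    exact ⟨rfl, rfl, fun j => j.elim0⟩

lemma chainSet_zero_ne {α β : YP} (h : α ≠ β) : chainSet 0 α β = ∅ := by
  ext c
  simp only [chainSet, Set.mem_setOf_eq, Set.mem_empty_iff_false, iff_false]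
  rintro ⟨h0, h1, -⟩
  exact h (h0 ▸ h1 ▸ rfl)

lemma nchains_zero (α β : YP) : nchains 0 α β = if α = β then 1 else 0 := by
  rcases eq_or_ne α β with rfl | h
  · simp [nchains_def, chainSet_zero_self]
  · simp [nchains_def, chainSet_zero_ne h, h]

/-- The finset of elements covered by `β`. -/
noncomputable def covPF (β : YP) : Finset YP := (L (lvl β - 1)).filter (fun γ => PairCov γ β)

/-- The finset of elements covering `γ`. -/
noncomputable def upPF (γ : YP) : Finset YP := (L (lvl γ + 1)).filter (fun β => PairCov γ β)

lemma mem_covPF {β γ : YP} : γ ∈ covPF β ↔ PairCov γ β := by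
  simp only [covPF, Finset.mem_filter, mem_L, and_iff_right_iff_imp]
  intro h
  have := pairCov_lvl h
  omega

lemma mem_upPF {γ β : YP} : β ∈ upPF γ ↔ PairCov γ β := by
  simp only [upPF, Finset.mem_filter, mem_L, and_iff_right_iff_imp]
  intro h
  exact pairCov_lvl h

lemma snoc_mem_chainSet {k : ℕ} {α γ β : YP} (hc : PairCov γ β) {c : Fin (k+1) → YP}
    (h : c ∈ chainSet k α γ) : Fin.snoc c β ∈ chainSet (k+1) α β := by
  obtain ⟨h0, hl, hcov⟩ := h
  refine ⟨?_, ?_, ?_⟩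
  · have e : (0 : Fin (k+2)) = Fin.castSucc (0 : Fin (k+1)) := by ext; simp
    rw [e, Fin.snoc_castSucc]
    exact h0
  · simp
  · intro j
    refine Fin.lastCases ?_ ?_ j
    · rw [Fin.succ_last, Fin.snoc_last, Fin.snoc_castSucc, hl]
      exact hc
    · intro j'
      rw [Fin.succ_castSucc, Fin.snoc_castSucc, Fin.snoc_castSucc]
      exact hcov j'

lemma chain_decomp {k : ℕ} {α β : YP} {c : Fin (k+2) → YP} (h : c ∈ chainSet (k+1) α β) :
    PairCov (c (Fin.castSucc (Fin.last k))) β ∧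
      Fin.init c ∈ chainSet k α (c (Fin.castSucc (Fin.last k))) := by
  obtain ⟨h0, hl, hcov⟩ := h
  constructor
  · have := hcov (Fin.last k)
    rwa [Fin.succ_last, hl] at this
  · refine ⟨?_, rfl, ?_⟩
    · show c (Fin.castSucc 0) = α
      rwa [Fin.castSucc_zero]
    · intro j
      have := hcov (Fin.castSucc j)
      show PairCov (c (Fin.castSucc (Fin.castSucc j))) (c (Fin.castSucc j.succ))
      rwa [Fin.succ_castSucc] at this


lemma chainSet_finite : ∀ (k : ℕ) (α β : YP), (chainSet k α β).Finite := by
  intro k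
  induction k with
  | zero =>
    intro α β
    rcases eq_or_ne α β with rfl | h
    · rw [chainSet_zero_self]; exact Set.finite_singleton _
    · rw [chainSet_zero_ne h]; exact Set.finite_empty
  | succ k ih =>
    intro α β
    have hsub : chainSet (k+1) α β ⊆
        ⋃ γ ∈ (covPF β : Set YP), (fun c => Fin.snoc c β) '' chainSet k α γ := by
      intro c hcmem
      obtain ⟨h1, h2⟩ := chain_decomp hcmem
      refine Set.mem_biUnion (Finset.mem_coe.2 (mem_covPF.2 h1)) ?_
      refine ⟨Fin.init c, h2, ?_⟩
      have hl : c (Fin.last (k+1)) = β := hcmem.2.1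
      rw [← hl]
      exact Fin.snoc_init_self c
    exact Set.Finite.subset
      (Set.Finite.biUnion (covPF β).finite_toSet (fun γ _ => (ih α γ).image _)) hsub

lemma mem_chainSet_last {k : ℕ} {α β : YP} {c : Fin (k+1) → YP} (h : c ∈ chainSet k α β) :
    c (Fin.last k) = β := h.2.1

lemma nchains_succ (k : ℕ) (α β : YP) :
    nchains (k+1) α β = ∑ γ ∈ covPF β, nchains k α γ := by
  have hfin := chainSet_finite (k+1) α β
  rw [nchains_def, Set.ncard_eq_toFinset_card _ hfin]
  rw [Finset.card_eq_sum_card_fiberwise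
    (f := fun c => c (Fin.castSucc (Fin.last k))) (t := covPF β)
    (fun c hc => mem_covPF.2 (chain_decomp ((Set.Finite.mem_toFinset hfin).1 hc)).1)]
  refine Finset.sum_congr rfl fun γ hγ => ?_
  rw [nchains_def, Set.ncard_eq_toFinset_card _ (chainSet_finite k α γ)]
  apply Finset.card_bij (fun c _ => Fin.init c)
  · intro c hc
    rw [Finset.mem_filter, Set.Finite.mem_toFinset] at hc
    rw [Set.Finite.mem_toFinset]
    have := (chain_decomp hc.1).2
    rwa [hc.2] at this
  · intro c hc c' hc' heq
    rw [Finset.mem_filter, Set.Finite.mem_toFinset] at hc hc'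
    have e1 : c = Fin.snoc (Fin.init c) β := by
      rw [← mem_chainSet_last hc.1]; exact (Fin.snoc_init_self c).symm
    have e2 : c' = Fin.snoc (Fin.init c') β := by
      rw [← mem_chainSet_last hc'.1]; exact (Fin.snoc_init_self c').symm
    rw [e1, e2, heq]
  · intro c'' hc''
    rw [Set.Finite.mem_toFinset] at hc''
    refine ⟨Fin.snoc c'' β, ?_, ?_⟩
    · rw [Finset.mem_filter, Set.Finite.mem_toFinset]
      refine ⟨snoc_mem_chainSet (mem_covPF.1 hγ) hc'', ?_⟩
      rw [Fin.snoc_castSucc]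
      exact mem_chainSet_last hc''
    · exact Fin.init_snoc _ _


lemma NN_eq_lvl_eq {α β : YP} (h : lvl α = lvl β) : NN α β = if α = β then 1 else 0 := by
  rw [NN, h, Nat.sub_self, nchains_zero]

lemma NN_succ {α β : YP} {m : ℕ} (hα : lvl α ≤ m) (hβ : lvl β = m + 1) :
    NN α β = ∑ γ ∈ covPF β, NN α γ := by
  have h1 : lvl β - lvl α = (m - lvl α) + 1 := by omega
  rw [NN, h1, nchains_succ]
  refine Finset.sum_congr rfl fun γ hγ => ?_
  have hγl : lvl γ = m := by
    have := pairCov_lvl (mem_covPF.1 hγ); omega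
  rw [NN, hγl]

lemma dd_bot : dd (⊥, ⊥) = 1 := by
  rw [dd, NN_eq_lvl_eq rfl, if_pos rfl]

lemma dd_branch {β : YP} {m : ℕ} (hβ : lvl β = m + 1) :
    dd β = ∑ γ ∈ covPF β, dd γ :=
  NN_succ (by rw [lvl_bot]; omega) hβ

/-! ### Single diagram corner structure -/

def addable (μ : YoungDiagram) (k : ℕ) : Prop := k = 0 ∨ μ.rowLen k < μ.rowLen (k - 1)

def removable (μ : YoungDiagram) (k : ℕ) : Prop := μ.rowLen (k + 1) < μ.rowLen k

lemma card_lb {μ : YoungDiagram} {k : ℕ} (h : 0 < μ.rowLen k) : k + 1 ≤ μ.card := by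
  have hsub : (Finset.range (k+1)).image (fun i => (i, 0)) ⊆ μ.cells := by
    intro x hx
    simp only [Finset.mem_image, Finset.mem_range] at hx
    obtain ⟨i, hi, rfl⟩ := hx
    rw [YoungDiagram.mem_cells, YoungDiagram.mem_iff_lt_rowLen]
    calc 0 < μ.rowLen k := h
    _ ≤ μ.rowLen i := μ.rowLen_anti i k (by omega)
  have := Finset.card_le_card hsub
  rwa [Finset.card_image_of_injective _ (fun a b hab => by simpa using hab),
    Finset.card_range] at this

def addCellD (μ : YoungDiagram) (k : ℕ) (h : addable μ k) : YoungDiagram where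
  cells := insert (k, μ.rowLen k) μ.cells
  isLowerSet := by
    rw [Finset.coe_insert]
    intro a b hba ha
    rcases ha with rfl | ha
    · -- a = (k, rowLen k)
      obtain ⟨i, j⟩ := b
      obtain ⟨h1, h2⟩ := hba
      simp only [Set.mem_insert_iff]
      rcases Nat.lt_or_ge i k with hik | hik
      · right
        rw [Finset.mem_coe, YoungDiagram.mem_cells, YoungDiagram.mem_iff_lt_rowLen]
        rcases h with rfl | h
        · omega
        · calc j ≤ μ.rowLen k := h2
          _ < μ.rowLen (k-1) := h
          _ ≤ μ.rowLen i := μ.rowLen_anti i (k-1) (by omega)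
      · have hik' : i = k := by omega
        subst hik'
        rcases Nat.lt_or_ge j (μ.rowLen i) with hj | hj
        · right
          rw [Finset.mem_coe, YoungDiagram.mem_cells, YoungDiagram.mem_iff_lt_rowLen]
          exact hj
        · left
          have : j = μ.rowLen i := by omega
          rw [this]
    · right
      exact μ.isLowerSet hba ha

lemma addCellD_cov {μ : YoungDiagram} {k : ℕ} (h : addable μ k) : YDCov μ (addCellD μ k h) := by
  constructor
  · rw [← YoungDiagram.cells_subset_iff]
    exact Finset.subset_insert _ _
  · show (insert (k, μ.rowLen k) μ.cells).card = _
    rw [Finset.card_insert_of_notMem (by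
      rw [YoungDiagram.mem_cells, YoungDiagram.mem_iff_lt_rowLen]; omega)]

def delCellD (μ : YoungDiagram) (k : ℕ) (h : removable μ k) : YoungDiagram where
  cells := μ.cells.erase (k, μ.rowLen k - 1)
  isLowerSet := by
    rw [Finset.coe_erase]
    intro a b hba ha
    obtain ⟨ha1, ha2⟩ := ha
    constructor
    · exact μ.isLowerSet hba ha1
    · simp only [Set.mem_singleton_iff]
      intro hb
      subst hb
      obtain ⟨i, j⟩ := a
      obtain ⟨h1, h2⟩ := hba
      simp only at h1 h2
      have hmem : j < μ.rowLen i := by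
        rw [← YoungDiagram.mem_iff_lt_rowLen]
        exact ha1
      apply ha2
      simp only [Set.mem_singleton_iff]
      rcases Nat.lt_or_ge k i with hik | hik
      · exfalso
        have : μ.rowLen i ≤ μ.rowLen (k+1) := μ.rowLen_anti (k+1) i (by omega)
        unfold removable at h
        omega
      · have hik' : i = k := by omega
        subst hik'
        have : j = μ.rowLen i - 1 := by omega
        rw [this]
  
lemma delCellD_cov {μ : YoungDiagram} {k : ℕ} (h : removable μ k) : YDCov (delCellD μ k h) μ := by
  have hmem : (k, μ.rowLen k - 1) ∈ μ.cells := by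
    rw [YoungDiagram.mem_cells, YoungDiagram.mem_iff_lt_rowLen]
    unfold removable at h
    omega
  constructor
  · rw [← YoungDiagram.cells_subset_iff]
    exact Finset.erase_subset _ _
  · show μ.card = (μ.cells.erase (k, μ.rowLen k - 1)).card + 1
    rw [Finset.card_erase_of_mem hmem]
    have : 0 < μ.cells.card := Finset.card_pos.2 ⟨_, hmem⟩
    unfold YoungDiagram.card
    omega

lemma cov_up_eq {μ ν : YoungDiagram} (h : YDCov μ ν) :
    ∃ k, ∃ hk : addable μ k, k ≤ μ.card ∧ ν = addCellD μ k hk := by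
  obtain ⟨hle, hcard⟩ := h
  have hsub : μ.cells ⊆ ν.cells := YoungDiagram.cells_subset_iff.2 hle
  have hsd : (ν.cells \ μ.cells).card = 1 := by
    rw [Finset.card_sdiff_of_subset hsub]
    unfold YoungDiagram.card at hcard
    omega
  obtain ⟨c, hc⟩ := Finset.card_eq_one.1 hsd
  obtain ⟨k, j⟩ := c
  have hkj : (k, j) ∈ ν.cells ∧ (k, j) ∉ μ.cells := by
    have : (k, j) ∈ ν.cells \ μ.cells := by rw [hc]; exact Finset.mem_singleton_self _
    exact ⟨(Finset.mem_sdiff.1 this).1, (Finset.mem_sdiff.1 this).2⟩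
  have hcells : ν.cells = insert (k, j) μ.cells := by
    ext x
    simp only [Finset.mem_insert]
    constructor
    · intro hx
      by_cases hxμ : x ∈ μ.cells
      · exact Or.inr hxμ
      · left
        have : x ∈ ν.cells \ μ.cells := Finset.mem_sdiff.2 ⟨hx, hxμ⟩
        rw [hc, Finset.mem_singleton] at this
        exact this
    · rintro (rfl | hx)
      · exact hkj.1
      · exact hsub hx
  have hmemμ : ∀ x, x ∈ μ.cells ↔ x ∈ μ := fun x => YoungDiagram.mem_cells x
  have hney : (k, j) ∉ μ := fun hmem => hkj.2 ((hmemμ _).2 hmem)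
  have hrow : j = μ.rowLen k := by
    have h1 : μ.rowLen k ≤ j := by
      by_contra hcon
      exact hney (YoungDiagram.mem_iff_lt_rowLen.2 (by omega))
    have h2 : ∀ j' < j, (k, j') ∈ μ := by
      intro j' hj'
      have hν : (k, j') ∈ ν := ν.up_left_mem (le_refl k) (le_of_lt hj') ((YoungDiagram.mem_cells _).1 hkj.1)
      have : (k, j') ∈ ν.cells := (YoungDiagram.mem_cells _).2 hν
      rw [hcells, Finset.mem_insert] at this
      rcases this with heq | hmem
      · exfalso
        injection heq with e1 e2
        omega
      · exact (hmemμ _).1 hmem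
    rcases Nat.eq_zero_or_pos j with rfl | hj
    · omega
    · have := h2 (j-1) (by omega)
      rw [YoungDiagram.mem_iff_lt_rowLen] at this
      omega
  have hadd : addable μ k := by
    rcases Nat.eq_zero_or_pos k with rfl | hk
    · exact Or.inl rfl
    · right
      have hν : (k-1, j) ∈ ν := ν.up_left_mem (by omega) (le_refl j) ((YoungDiagram.mem_cells _).1 hkj.1)
      have : (k-1, j) ∈ ν.cells := (YoungDiagram.mem_cells _).2 hν
      rw [hcells, Finset.mem_insert] at this
      rcases this with heq | hmem
      · exfalso; injection heq with e1 e2; omega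
      · have := YoungDiagram.mem_iff_lt_rowLen.1 ((hmemμ _).1 hmem)
        omega
  refine ⟨k, hadd, ?_, ?_⟩
  · rcases Nat.eq_zero_or_pos k with rfl | hk
    · omega
    · rcases hadd with h0 | hlt
      · omega
      · have : 0 < μ.rowLen (k-1) := by omega
        have := card_lb this
        omega
  · apply yd_ext
    show ν.cells = (addCellD μ k hadd).cells
    rw [hcells]
    show _ = insert (k, μ.rowLen k) μ.cells
    rw [hrow]

lemma cov_dn_eq {μ ν : YoungDiagram} (h : YDCov ν μ) :
    ∃ k, ∃ hk : removable μ k, k ≤ μ.card ∧ ν = delCellD μ k hk := by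
  obtain ⟨hle, hcard⟩ := h
  have hsub : ν.cells ⊆ μ.cells := YoungDiagram.cells_subset_iff.2 hle
  have hsd : (μ.cells \ ν.cells).card = 1 := by
    rw [Finset.card_sdiff_of_subset hsub]
    unfold YoungDiagram.card at hcard
    omega
  obtain ⟨c, hc⟩ := Finset.card_eq_one.1 hsd
  obtain ⟨k, j⟩ := c
  have hkj : (k, j) ∈ μ.cells ∧ (k, j) ∉ ν.cells := by
    have : (k, j) ∈ μ.cells \ ν.cells := by rw [hc]; exact Finset.mem_singleton_self _
    exact ⟨(Finset.mem_sdiff.1 this).1, (Finset.mem_sdiff.1 this).2⟩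
  have hcells : μ.cells = insert (k, j) ν.cells := by
    ext x
    simp only [Finset.mem_insert]
    constructor
    · intro hx
      by_cases hxν : x ∈ ν.cells
      · exact Or.inr hxν
      · left
        have : x ∈ μ.cells \ ν.cells := Finset.mem_sdiff.2 ⟨hx, hxν⟩
        rw [hc, Finset.mem_singleton] at this
        exact this
    · rintro (rfl | hx)
      · exact hkj.1
      · exact hsub hx
  have hjlt : j < μ.rowLen k := YoungDiagram.mem_iff_lt_rowLen.1 ((YoungDiagram.mem_cells _).1 hkj.1)
  have hstep : ∀ a b : ℕ, (k, j) ≤ (a, b) → (a, b) ∈ μ → (a, b) = (k, j) := by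
    intro a b hab hmem
    by_contra hne
    have : (a, b) ∈ ν.cells := by
      have : (a, b) ∈ μ.cells := (YoungDiagram.mem_cells _).2 hmem
      rw [hcells, Finset.mem_insert] at this
      rcases this with heq | hm
      · exact absurd heq hne
      · exact hm
    have : (k, j) ∈ ν := ν.up_left_mem hab.1 hab.2 ((YoungDiagram.mem_cells _).1 this)
    exact hkj.2 ((YoungDiagram.mem_cells _).2 this)
  have hrow : j = μ.rowLen k - 1 := by
    by_contra hne
    have hj1 : j + 1 < μ.rowLen k := by omega
    have := hstep k (j+1) (by constructor <;> simp) (YoungDiagram.mem_iff_lt_rowLen.2 hj1)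
    injection this with e1 e2
    omega
  have hrem : removable μ k := by
    unfold removable
    by_contra hcon
    have hge : μ.rowLen k ≤ μ.rowLen (k+1) := by omega
    have hmem : (k+1, j) ∈ μ := YoungDiagram.mem_iff_lt_rowLen.2 (by omega)
    have := hstep (k+1) j (by constructor <;> simp) hmem
    injection this with e1 e2
    omega
  refine ⟨k, hrem, ?_, ?_⟩
  · have : 0 < μ.rowLen k := by omega
    have := card_lb this
    omega
  · apply yd_ext
    show ν.cells = μ.cells.erase (k, μ.rowLen k - 1)
    rw [hcells, ← hrow, Finset.erase_insert hkj.2]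

noncomputable def upF (μ : YoungDiagram) : Finset YoungDiagram :=
  ((yd_card_finite (μ.card + 1)).toFinset).filter (fun ν => YDCov μ ν)

noncomputable def dnF (μ : YoungDiagram) : Finset YoungDiagram :=
  ((yd_card_finite μ.card).toFinset).filter (fun ν => YDCov ν μ)

lemma mem_upF {μ ν : YoungDiagram} : ν ∈ upF μ ↔ YDCov μ ν := by
  unfold upF
  rw [Finset.mem_filter, Set.Finite.mem_toFinset, Set.mem_setOf_eq]
  exact ⟨fun h => h.2, fun h => ⟨le_of_eq h.2, h⟩⟩

lemma mem_dnF {μ ν : YoungDiagram} : ν ∈ dnF μ ↔ YDCov ν μ := by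
  unfold dnF
  rw [Finset.mem_filter, Set.Finite.mem_toFinset, Set.mem_setOf_eq]
  exact ⟨fun h => h.2, fun h => ⟨by have := h.2; omega, h⟩⟩

noncomputable def addableF (μ : YoungDiagram) : Finset ℕ :=
  (Finset.range (μ.card + 1)).filter (addable μ)

noncomputable def removableF (μ : YoungDiagram) : Finset ℕ :=
  (Finset.range (μ.card + 1)).filter (removable μ)

lemma card_upF (μ : YoungDiagram) : (upF μ).card = (addableF μ).card := by
  symm
  apply Finset.card_bij (fun k hk => addCellD μ k (by
    simp only [addableF, Finset.mem_filter] at hk; exact hk.2))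
  · intro k hk
    exact mem_upF.2 (addCellD_cov _)
  · intro k hk k' hk' heq
    by_contra hne
    have h1 : (k, μ.rowLen k) ∈ (addCellD μ k' (by
        simp only [addableF, Finset.mem_filter] at hk'; exact hk'.2)).cells := by
      rw [← heq]
      exact Finset.mem_insert_self _ _
    rw [show (addCellD μ k' _).cells = insert (k', μ.rowLen k') μ.cells from rfl,
      Finset.mem_insert] at h1
    rcases h1 with heq2 | hmem
    · injection heq2 with e1 e2; exact hne e1
    · rw [YoungDiagram.mem_cells, YoungDiagram.mem_iff_lt_rowLen] at hmem
      omega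
  · intro ν hν
    obtain ⟨k, hk, hkc, rfl⟩ := cov_up_eq (mem_upF.1 hν)
    refine ⟨k, ?_, rfl⟩
    simp only [addableF, Finset.mem_filter, Finset.mem_range]
    exact ⟨by omega, hk⟩

lemma card_dnF (μ : YoungDiagram) : (dnF μ).card = (removableF μ).card := by
  symm
  apply Finset.card_bij (fun k hk => delCellD μ k (by
    simp only [removableF, Finset.mem_filter] at hk; exact hk.2))
  · intro k hk
    exact mem_dnF.2 (delCellD_cov _)
  · intro k hk k' hk' heq
    simp only [removableF, Finset.mem_filter, Finset.mem_range] at hk hk'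
    by_contra hne
    have hmem : (k, μ.rowLen k - 1) ∈ μ.cells := by
      rw [YoungDiagram.mem_cells, YoungDiagram.mem_iff_lt_rowLen]
      have := hk.2; unfold removable at this; omega
    have h1 : (k, μ.rowLen k - 1) ∈ (delCellD μ k (hk.2)).cells := by
      rw [heq]
      show _ ∈ μ.cells.erase (k', μ.rowLen k' - 1)
      rw [Finset.mem_erase]
      refine ⟨?_, hmem⟩
      intro heq2
      injection heq2 with e1 e2
      exact hne e1
    rw [show (delCellD μ k _).cells = μ.cells.erase (k, μ.rowLen k - 1) from rfl,
      Finset.mem_erase] at h1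
    exact h1.1 rfl
  · intro ν hν
    obtain ⟨k, hk, hkc, rfl⟩ := cov_dn_eq (mem_dnF.1 hν)
    refine ⟨k, ?_, rfl⟩
    simp only [removableF, Finset.mem_filter, Finset.mem_range]
    exact ⟨by omega, hk⟩

lemma addableF_eq (μ : YoungDiagram) :
    addableF μ = insert 0 ((removableF μ).image Nat.succ) := by
  ext x
  rw [Finset.mem_insert, Finset.mem_image]
  unfold addableF removableF
  simp only [Finset.mem_filter, Finset.mem_range]
  constructor
  · rintro ⟨hx, hadd⟩
    rcases Nat.eq_zero_or_pos x with rfl | hpos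
    · exact Or.inl rfl
    · right
      refine ⟨x - 1, ⟨?_, ?_⟩, by omega⟩
      · rcases hadd with h0 | hlt
        · omega
        · have : 0 < μ.rowLen (x-1) := by omega
          have := card_lb this
          omega
      · unfold removable
        rcases hadd with h0 | hlt
        · omega
        · have : x - 1 + 1 = x := by omega
          rw [this]
          exact hlt
  · rintro (rfl | ⟨k, ⟨hk, hrem⟩, rfl⟩)
    · exact ⟨by omega, Or.inl rfl⟩
    · unfold removable at hrem
      constructor
      · have : 0 < μ.rowLen k := by omega
        have := card_lb this
        omega
      · right
        have : k.succ - 1 = k := by omega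
        rw [this]
        exact hrem

lemma card_addableF (μ : YoungDiagram) : (addableF μ).card = (removableF μ).card + 1 := by
  rw [addableF_eq, Finset.card_insert_of_notMem (by
    intro h
    obtain ⟨k, -, hk⟩ := Finset.mem_image.1 h
    omega),
    Finset.card_image_of_injective _ Nat.succ_injective]

lemma card_upF_eq (μ : YoungDiagram) : (upF μ).card = (dnF μ).card + 1 := by
  rw [card_upF, card_dnF, card_addableF]

lemma sum_distinct_pos (t : Finset ℕ) (h : ∀ v ∈ t, 1 ≤ v) :
    t.card * (t.card + 1) ≤ 2 * ∑ v ∈ t, v := by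
  induction t using Finset.strongInduction with
  | _ t ih =>
  rcases t.eq_empty_or_nonempty with rfl | hne
  · simp
  · have hM := t.max'_mem hne
    have hcard : t.card ≤ t.max' hne := by
      have hsub : t ⊆ Finset.Icc 1 (t.max' hne) :=
        fun v hv => Finset.mem_Icc.2 ⟨h v hv, Finset.le_max' t v hv⟩
      have := Finset.card_le_card hsub
      rwa [Nat.card_Icc, Nat.add_sub_cancel] at this
    have hsum : t.max' hne + ∑ v ∈ t.erase (t.max' hne), v = ∑ v ∈ t, v :=
      Finset.add_sum_erase t (fun v => v) hM
    have hih := ih (t.erase (t.max' hne)) (Finset.erase_ssubset hM)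
      (fun v hv => h v (Finset.mem_of_mem_erase hv))
    have hc : (t.erase (t.max' hne)).card = t.card - 1 := Finset.card_erase_of_mem hM
    have hpos : 0 < t.card := Finset.card_pos.2 hne
    rw [hc] at hih
    obtain ⟨c', hc'⟩ : ∃ c', t.card = c' + 1 := ⟨t.card - 1, by omega⟩
    rw [hc', Nat.add_sub_cancel] at hih
    rw [hc'] at hcard ⊢
    rw [← hsum]
    nlinarith [hih, hcard]

lemma corner_bound_single (μ : YoungDiagram) :
    (removableF μ).card * ((removableF μ).card + 1) ≤ 2 * μ.card := by
  set R := removableF μ with hR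
  have hrows : ∑ k ∈ R, μ.rowLen k ≤ μ.card := by
    have hdisj : ∀ k ∈ R, ∀ k' ∈ R, k ≠ k' → Disjoint (μ.row k) (μ.row k') := by
      intro k _ k' _ hne
      rw [Finset.disjoint_left]
      intro x hx hx'
      rw [YoungDiagram.mem_row_iff] at hx hx'
      exact hne (hx.2 ▸ hx'.2 ▸ rfl)
    have hsub : R.biUnion (fun k => μ.row k) ⊆ μ.cells := by
      intro x hx
      obtain ⟨k, -, hk⟩ := Finset.mem_biUnion.1 hx
      exact ((YoungDiagram.mem_cells x).2 (YoungDiagram.mem_row_iff.1 hk).1)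
    calc ∑ k ∈ R, μ.rowLen k = ∑ k ∈ R, (μ.row k).card := by
          refine Finset.sum_congr rfl fun k _ => μ.rowLen_eq_card
      _ = (R.biUnion (fun k => μ.row k)).card := (Finset.card_biUnion hdisj).symm
      _ ≤ μ.cells.card := Finset.card_le_card hsub
  have hinj : Set.InjOn μ.rowLen R := by
    intro k hk k' hk' heq
    by_contra hne
    rw [Finset.mem_coe, hR] at hk hk'
    simp only [removableF, Finset.mem_filter] at hk hk'
    rcases Nat.lt_or_ge k k' with hlt | hge
    · have h1 : μ.rowLen k' ≤ μ.rowLen (k+1) := μ.rowLen_anti (k+1) k' (by omega)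
      have h2 := hk.2; unfold removable at h2
      omega
    · have hlt : k' < k := by omega
      have h1 : μ.rowLen k ≤ μ.rowLen (k'+1) := μ.rowLen_anti (k'+1) k (by omega)
      have h2 := hk'.2; unfold removable at h2
      omega
  have hcardim : (R.image μ.rowLen).card = R.card := Finset.card_image_of_injOn hinj
  have hsumim : ∑ v ∈ R.image μ.rowLen, v = ∑ k ∈ R, μ.rowLen k :=
    Finset.sum_image (fun k hk k' hk' => hinj (Finset.mem_coe.2 hk) (Finset.mem_coe.2 hk'))
  have hposim : ∀ v ∈ R.image μ.rowLen, 1 ≤ v := by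
    intro v hv
    obtain ⟨k, hk, rfl⟩ := Finset.mem_image.1 hv
    rw [hR] at hk
    simp only [removableF, Finset.mem_filter] at hk
    have := hk.2; unfold removable at this
    omega
  have := sum_distinct_pos (R.image μ.rowLen) hposim
  rw [hcardim, hsumim] at this
  omega

/-- number of common covers -/
noncomputable def caP (γ δ : YP) : ℕ :=
  ((L (lvl γ + 1)).filter (fun β => PairCov γ β ∧ PairCov δ β)).card

/-- number of common covered elements -/
noncomputable def ccP (γ δ : YP) : ℕ :=
  ((L (lvl γ - 1)).filter (fun β => PairCov β γ ∧ PairCov β δ)).card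

lemma caP_self (γ : YP) : caP γ γ = (upPF γ).card := by
  unfold caP upPF
  congr 1
  apply Finset.filter_congr
  intro β _
  simp

lemma ccP_self (γ : YP) : ccP γ γ = (covPF γ).card := by
  unfold ccP covPF
  congr 1
  apply Finset.filter_congr
  intro β _
  simp

lemma sum_ite_card {s : Finset YP} {p : YP → Prop} [DecidablePred p] {c : ℕ} :
    ∑ x ∈ s, (if p x then c else 0) = (s.filter p).card * c := by
  rw [← Finset.sum_filter, Finset.sum_const, smul_eq_mul]

lemma upPF_eq (γ : YP) :
    upPF γ = ((upF γ.1).image (fun μ => (μ, γ.2))) ∪ ((upF γ.2).image (fun ν => (γ.1, ν))) := by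
  ext β
  rw [mem_upPF, Finset.mem_union, Finset.mem_image, Finset.mem_image]
  constructor
  · intro h
    rcases h with ⟨hcov, heq⟩ | ⟨heq, hcov⟩
    · exact Or.inl ⟨β.1, mem_upF.2 hcov, by rw [heq]⟩
    · exact Or.inr ⟨β.2, mem_upF.2 hcov, by rw [heq]⟩
  · rintro (⟨μ, hμ, rfl⟩ | ⟨ν, hν, rfl⟩)
    · exact Or.inl ⟨mem_upF.1 hμ, rfl⟩
    · exact Or.inr ⟨rfl, mem_upF.1 hν⟩

lemma covPF_eq (γ : YP) :
    covPF γ = ((dnF γ.1).image (fun μ => (μ, γ.2))) ∪ ((dnF γ.2).image (fun ν => (γ.1, ν))) := by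
  ext β
  rw [mem_covPF, Finset.mem_union, Finset.mem_image, Finset.mem_image]
  constructor
  · intro h
    rcases h with ⟨hcov, heq⟩ | ⟨heq, hcov⟩
    · exact Or.inl ⟨β.1, mem_dnF.2 hcov, by rw [← heq]⟩
    · exact Or.inr ⟨β.2, mem_dnF.2 hcov, by rw [← heq]⟩
  · rintro (⟨μ, hμ, rfl⟩ | ⟨ν, hν, rfl⟩)
    · exact Or.inl ⟨mem_dnF.1 hμ, rfl⟩
    · exact Or.inr ⟨rfl, mem_dnF.1 hν⟩

lemma card_upPF (γ : YP) : (upPF γ).card = (upF γ.1).card + (upF γ.2).card := by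
  rw [upPF_eq, Finset.card_union_of_disjoint, Finset.card_image_of_injective _
    (fun a b hab => by simpa using hab),
    Finset.card_image_of_injective _ (fun a b hab => by simpa using hab)]
  · rw [Finset.disjoint_left]
    rintro x hx hx'
    obtain ⟨μ, hμ, rfl⟩ := Finset.mem_image.1 hx
    obtain ⟨ν, hν, heq⟩ := Finset.mem_image.1 hx'
    have h2 : ν = γ.2 := by injection heq with e1 e2
    have := (mem_upF.1 hν).2
    rw [h2] at this
    omega

lemma card_covPF (γ : YP) : (covPF γ).card = (dnF γ.1).card + (dnF γ.2).card := by
  rw [covPF_eq, Finset.card_union_of_disjoint, Finset.card_image_of_injective _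
    (fun a b hab => by simpa using hab),
    Finset.card_image_of_injective _ (fun a b hab => by simpa using hab)]
  · rw [Finset.disjoint_left]
    rintro x hx hx'
    obtain ⟨μ, hμ, rfl⟩ := Finset.mem_image.1 hx
    obtain ⟨ν, hν, heq⟩ := Finset.mem_image.1 hx'
    have h2 : ν = γ.2 := by injection heq with e1 e2
    have := (mem_dnF.1 hν).2
    rw [h2] at this
    omega

lemma corner_bound_pair {γ : YP} {m : ℕ} (h : lvl γ = m) :
    (covPF γ).card * ((covPF γ).card + 1) ≤ 4 * m := by
  rw [card_covPF, card_dnF, card_dnF]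
  have b1 := corner_bound_single γ.1
  have b2 := corner_bound_single γ.2
  have hc : γ.1.card + γ.2.card = m := h
  nlinarith [b1, b2, two_mul_le_add_sq (removableF γ.1).card (removableF γ.2).card]

lemma E' (γ : YP) : caP γ γ = ccP γ γ + 2 := by
  rw [caP_self, ccP_self, card_upPF, card_covPF, card_upF_eq, card_upF_eq]
  ring

lemma P1' {γ δ : YP} (hl : lvl γ = lvl δ) (hne : γ ≠ δ) : caP γ δ = ccP γ δ := by
  set m := lvl γ with hm
  have hm1 : 1 ≤ m := by
    by_contra hcon
    have h0 : lvl γ = 0 := by omega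
    have h0' : lvl δ = 0 := by omega
    exact hne ((lvl_eq_zero h0).trans (lvl_eq_zero h0').symm)
  set sup : YP := (γ.1 ⊔ δ.1, γ.2 ⊔ δ.2) with hsup
  set inf : YP := (γ.1 ⊓ δ.1, γ.2 ⊓ δ.2) with hinf
  have hmod : lvl sup + lvl inf = 2 * m := by
    have e1 : (γ.1 ⊔ δ.1).card + (γ.1 ⊓ δ.1).card = γ.1.card + δ.1.card := by
      show ((γ.1 ⊔ δ.1).cells).card + ((γ.1 ⊓ δ.1).cells).card
        = (γ.1.cells).card + (δ.1.cells).card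
      rw [YoungDiagram.cells_sup, YoungDiagram.cells_inf]
      exact Finset.card_union_add_card_inter _ _
    have e2 : (γ.2 ⊔ δ.2).card + (γ.2 ⊓ δ.2).card = γ.2.card + δ.2.card := by
      show ((γ.2 ⊔ δ.2).cells).card + ((γ.2 ⊓ δ.2).cells).card
        = (γ.2.cells).card + (δ.2.cells).card
      rw [YoungDiagram.cells_sup, YoungDiagram.cells_inf]
      exact Finset.card_union_add_card_inter _ _
    have hlγ : lvl γ = γ.1.card + γ.2.card := rfl
    have hlδ : lvl δ = δ.1.card + δ.2.card := rfl
    have hls : lvl sup = (γ.1 ⊔ δ.1).card + (γ.2 ⊔ δ.2).card := rfl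
    have hli : lvl inf = (γ.1 ⊓ δ.1).card + (γ.2 ⊓ δ.2).card := rfl
    omega
  have hsup_ge : m + 1 ≤ lvl sup := by
    have c1 : γ.1.card ≤ (γ.1 ⊔ δ.1).card := card_mono le_sup_left
    have c2 : γ.2.card ≤ (γ.2 ⊔ δ.2).card := card_mono le_sup_left
    have d1 : δ.1.card ≤ (γ.1 ⊔ δ.1).card := card_mono le_sup_right
    have d2 : δ.2.card ≤ (γ.2 ⊔ δ.2).card := card_mono le_sup_right
    have hlγ : lvl γ = γ.1.card + γ.2.card := rfl
    have hlδ : lvl δ = δ.1.card + δ.2.card := rfl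
    have hls : lvl sup = (γ.1 ⊔ δ.1).card + (γ.2 ⊔ δ.2).card := rfl
    by_contra hcon
    have h1 : γ.1.card = (γ.1 ⊔ δ.1).card := by omega
    have h2 : γ.2.card = (γ.2 ⊔ δ.2).card := by omega
    have h3 : δ.1.card = (γ.1 ⊔ δ.1).card := by omega
    have h4 : δ.2.card = (γ.2 ⊔ δ.2).card := by omega
    have e1 : γ.1 = γ.1 ⊔ δ.1 := yd_eq_of_le_card le_sup_left (le_of_eq h1.symm)
    have e2 : γ.2 = γ.2 ⊔ δ.2 := yd_eq_of_le_card le_sup_left (le_of_eq h2.symm)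
    have e3 : δ.1 = γ.1 ⊔ δ.1 := yd_eq_of_le_card le_sup_right (le_of_eq h3.symm)
    have e4 : δ.2 = γ.2 ⊔ δ.2 := yd_eq_of_le_card le_sup_right (le_of_eq h4.symm)
    exact hne (Prod.ext (e1.trans e3.symm) (e2.trans e4.symm))
  have hca : caP γ δ = if lvl sup = m + 1 then 1 else 0 := by
    unfold caP
    rw [← hm]
    split_ifs with hcase
    · rw [Finset.card_eq_one]
      refine ⟨sup, ?_⟩
      ext β
      simp only [Finset.mem_filter, Finset.mem_singleton, mem_L]
      constructor
      · rintro ⟨hβl, h1, h2⟩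
        rw [pairCov_iff] at h1 h2
        have hs1 : γ.1 ⊔ δ.1 ≤ β.1 := sup_le h1.1 h2.1
        have hs2 : γ.2 ⊔ δ.2 ≤ β.2 := sup_le h1.2.1 h2.2.1
        have c1 := card_mono hs1
        have c2 := card_mono hs2
        have hlβ : lvl β = β.1.card + β.2.card := rfl
        have hls : lvl sup = (γ.1 ⊔ δ.1).card + (γ.2 ⊔ δ.2).card := rfl
        have e1 : γ.1 ⊔ δ.1 = β.1 := yd_eq_of_le_card hs1 (by omega)
        have e2 : γ.2 ⊔ δ.2 = β.2 := yd_eq_of_le_card hs2 (by omega)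
        exact (Prod.ext e1.symm e2.symm : β = sup).symm ▸ rfl
      · rintro rfl
        refine ⟨hcase, pairCov_iff.2 ⟨le_sup_left, le_sup_left, by omega⟩,
          pairCov_iff.2 ⟨le_sup_right, le_sup_right, by omega⟩⟩
    · rw [Finset.card_eq_zero]
      apply Finset.eq_empty_of_forall_notMem
      intro β hβ
      simp only [Finset.mem_filter, mem_L] at hβ
      obtain ⟨hβl, h1, h2⟩ := hβ
      rw [pairCov_iff] at h1 h2
      have hs1 : γ.1 ⊔ δ.1 ≤ β.1 := sup_le h1.1 h2.1
      have hs2 : γ.2 ⊔ δ.2 ≤ β.2 := sup_le h1.2.1 h2.2.1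
      have c1 := card_mono hs1
      have c2 := card_mono hs2
      have hlβ : lvl β = β.1.card + β.2.card := rfl
      have hls : lvl sup = (γ.1 ⊔ δ.1).card + (γ.2 ⊔ δ.2).card := rfl
      omega
  have hcc : ccP γ δ = if lvl inf + 1 = m then 1 else 0 := by
    unfold ccP
    rw [← hm]
    split_ifs with hcase
    · rw [Finset.card_eq_one]
      refine ⟨inf, ?_⟩
      ext β
      simp only [Finset.mem_filter, Finset.mem_singleton, mem_L]
      constructor
      · rintro ⟨hβl, h1, h2⟩
        rw [pairCov_iff] at h1 h2
        have hs1 : β.1 ≤ γ.1 ⊓ δ.1 := le_inf h1.1 h2.1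
        have hs2 : β.2 ≤ γ.2 ⊓ δ.2 := le_inf h1.2.1 h2.2.1
        have c1 := card_mono hs1
        have c2 := card_mono hs2
        have hlβ : lvl β = β.1.card + β.2.card := rfl
        have hli : lvl inf = (γ.1 ⊓ δ.1).card + (γ.2 ⊓ δ.2).card := rfl
        have e1 : β.1 = γ.1 ⊓ δ.1 := yd_eq_of_le_card hs1 (by omega)
        have e2 : β.2 = γ.2 ⊓ δ.2 := yd_eq_of_le_card hs2 (by omega)
        exact Prod.ext e1 e2
      · rintro rfl
        refine ⟨by omega, pairCov_iff.2 ⟨inf_le_left, inf_le_left, by omega⟩,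
          pairCov_iff.2 ⟨inf_le_right, inf_le_right, by omega⟩⟩
    · rw [Finset.card_eq_zero]
      apply Finset.eq_empty_of_forall_notMem
      intro β hβ
      simp only [Finset.mem_filter, mem_L] at hβ
      obtain ⟨hβl, h1, h2⟩ := hβ
      rw [pairCov_iff] at h1 h2
      have hs1 : β.1 ≤ γ.1 ⊓ δ.1 := le_inf h1.1 h2.1
      have hs2 : β.2 ≤ γ.2 ⊓ δ.2 := le_inf h1.2.1 h2.2.1
      have c1 := card_mono hs1
      have c2 := card_mono hs2
      have hlβ : lvl β = β.1.card + β.2.card := rfl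
      have hli : lvl inf = (γ.1 ⊓ δ.1).card + (γ.2 ⊓ δ.2).card := rfl
      omega
  rw [hca, hcc]
  have : (lvl sup = m + 1) ↔ (lvl inf + 1 = m) := by omega
  split_ifs with h1 h2 h2 <;> first | rfl | (exfalso; omega)


lemma ite_sum_push {p : Prop} [Decidable p] {s : Finset YP} {f : YP → ℕ} :
    (if p then ∑ x ∈ s, f x else 0) = ∑ x ∈ s, if p then f x else 0 := by
  split <;> simp

lemma sum_up : ∀ m : ℕ, ∀ γ : YP, lvl γ = m → ∑ β ∈ upPF γ, dd β = 2 * (m + 1) * dd γ := by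
  intro m
  induction m using Nat.strong_induction_on with
  | _ m ih =>
  intro γ hγ
  have h1 : ∑ β ∈ upPF γ, dd β = ∑ δ ∈ L m, caP γ δ * dd δ := by
    have step : ∀ β ∈ upPF γ, dd β = ∑ δ ∈ L m, (if PairCov δ β then dd δ else 0) := by
      intro β hβ
      have hβl : lvl β = m + 1 := by
        rw [mem_upPF] at hβ; rw [pairCov_lvl hβ, hγ]
      rw [dd_branch hβl, ← Finset.sum_filter]
      congr 1
      unfold covPF
      rw [hβl]
      norm_num
    rw [Finset.sum_congr rfl step]
    unfold upPF
    rw [hγ, Finset.sum_filter]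
    have e : ∀ β, (if PairCov γ β then ∑ δ ∈ L m, (if PairCov δ β then dd δ else 0) else 0)
        = ∑ δ ∈ L m, (if PairCov γ β ∧ PairCov δ β then dd δ else 0) := by
      intro β
      by_cases h : PairCov γ β
      · simp only [h, if_true, true_and]
      · simp [h]
    rw [Finset.sum_congr rfl (fun β _ => e β), Finset.sum_comm]
    refine Finset.sum_congr rfl fun δ _ => ?_
    rw [sum_ite_card]
    unfold caP
    rw [hγ]
  have h2 : ∑ δ ∈ L m, ccP γ δ * dd δ = 2 * m * dd γ := by
    have e1 : ∑ δ ∈ L m, ccP γ δ * dd δ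
        = ∑ β ∈ covPF γ, ∑ δ ∈ L m, (if PairCov β δ then dd δ else 0) := by
      unfold covPF
      rw [hγ, Finset.sum_filter]
      rw [Finset.sum_congr rfl (fun β _ => ite_sum_push), Finset.sum_comm]
      refine Finset.sum_congr rfl fun δ _ => ?_
      unfold ccP
      rw [hγ, ← sum_ite_card]
      refine Finset.sum_congr rfl fun β _ => ?_
      by_cases hpc : PairCov β γ <;> by_cases hpd : PairCov β δ <;> simp [hpc, hpd]
    rw [e1]
    rcases Nat.eq_zero_or_pos m with rfl | hm
    · have : covPF γ = ∅ := by
        apply Finset.eq_empty_of_forall_notMem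
        intro β hβ
        have := pairCov_lvl (mem_covPF.1 hβ)
        omega
      simp [this]
    · obtain ⟨m', rfl⟩ : ∃ m', m = m' + 1 := ⟨m - 1, by omega⟩
      have e2 : ∀ β ∈ covPF γ, (∑ δ ∈ L (m' + 1), (if PairCov β δ then dd δ else 0))
          = 2 * (m' + 1) * dd β := by
        intro β hβ
        have hβl : lvl β = m' := by
          have := pairCov_lvl (mem_covPF.1 hβ); omega
        have := ih m' (by omega) β hβl
        rw [← this]
        unfold upPF
        rw [hβl, Finset.sum_filter]
      rw [Finset.sum_congr rfl e2, ← Finset.mul_sum, ← dd_branch hγ]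
  -- combine via diagonal split
  have hγL : γ ∈ L m := mem_L.2 hγ
  have sp1 : caP γ γ * dd γ + ∑ δ ∈ (L m).erase γ, caP γ δ * dd δ = ∑ δ ∈ L m, caP γ δ * dd δ :=
    Finset.add_sum_erase (L m) (fun δ => caP γ δ * dd δ) hγL
  have sp2 : ccP γ γ * dd γ + ∑ δ ∈ (L m).erase γ, ccP γ δ * dd δ = ∑ δ ∈ L m, ccP γ δ * dd δ :=
    Finset.add_sum_erase (L m) (fun δ => ccP γ δ * dd δ) hγL
  have heq : ∀ δ ∈ (L m).erase γ, caP γ δ * dd δ = ccP γ δ * dd δ := by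
    intro δ hδ
    rw [Finset.mem_erase, mem_L] at hδ
    rw [P1' (by rw [hγ, hδ.2]) (Ne.symm hδ.1)]
  rw [Finset.sum_congr rfl heq] at sp1
  have hE := E' γ
  rw [h1, ← sp1, hE]
  have hr : (2:ℕ) * (m+1) * dd γ = 2*m*dd γ + 2*dd γ := by ring
  rw [hr, ← h2, ← sp2]
  ring


lemma sum_swap_cov (m : ℕ) (f : YP → YP → ℕ) :
    ∑ β ∈ L (m+1), ∑ γ ∈ covPF β, f γ β = ∑ γ ∈ L m, ∑ β ∈ upPF γ, f γ β := by
  have lhs : ∑ β ∈ L (m+1), ∑ γ ∈ covPF β, f γ β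
      = ∑ β ∈ L (m+1), ∑ γ ∈ L m, (if PairCov γ β then f γ β else 0) := by
    refine Finset.sum_congr rfl fun β hβ => ?_
    rw [mem_L] at hβ
    unfold covPF
    rw [hβ, Finset.sum_filter]
    norm_num
  have rhs : ∑ γ ∈ L m, ∑ β ∈ upPF γ, f γ β
      = ∑ γ ∈ L m, ∑ β ∈ L (m+1), (if PairCov γ β then f γ β else 0) := by
    refine Finset.sum_congr rfl fun γ hγ => ?_
    rw [mem_L] at hγ
    unfold upPF
    rw [hγ, Finset.sum_filter]
  rw [lhs, rhs, Finset.sum_comm]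

lemma sum_dd_sq : ∀ m : ℕ, ∑ β ∈ L m, dd β * dd β = 2 ^ m * m.factorial := by
  intro m
  induction m with
  | zero => simp [L_zero, dd_bot]
  | succ m ih =>
    have e1 : ∀ β ∈ L (m+1), dd β * dd β = ∑ γ ∈ covPF β, dd γ * dd β := by
      intro β hβ
      rw [mem_L] at hβ
      have e : dd β * dd β = (∑ γ ∈ covPF β, dd γ) * dd β := by rw [← dd_branch hβ]
      rw [e, Finset.sum_mul]
    rw [Finset.sum_congr rfl e1, sum_swap_cov m (fun γ β => dd γ * dd β)]
    have e2 : ∀ γ ∈ L m, ∑ β ∈ upPF γ, dd γ * dd β = 2 * (m+1) * (dd γ * dd γ) := by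
      intro γ hγ
      rw [mem_L] at hγ
      rw [← Finset.mul_sum, sum_up m γ hγ]
      ring
    rw [Finset.sum_congr rfl e2, ← Finset.mul_sum, ih, Nat.factorial_succ]
    ring

lemma sum_NN_dd (α : YP) : ∀ m : ℕ, lvl α ≤ m →
    ∑ β ∈ L m, NN α β * dd β = dd α * ∏ j ∈ Finset.Ico (lvl α) m, (2 * (j + 1)) := by
  intro m
  induction m with
  | zero =>
    intro h
    have hα : α = (⊥, ⊥) := lvl_eq_zero (by omega)
    subst hα
    rw [lvl_bot]
    simp [L_zero, dd_bot, NN_eq_lvl_eq rfl]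
  | succ m ih =>
    intro h
    rcases Nat.lt_or_ge (lvl α) (m+1) with hlt | hge
    · have hle : lvl α ≤ m := by omega
      have e1 : ∀ β ∈ L (m+1), NN α β * dd β = ∑ γ ∈ covPF β, NN α γ * dd β := by
        intro β hβ
        rw [mem_L] at hβ
        rw [NN_succ hle hβ, Finset.sum_mul]
      rw [Finset.sum_congr rfl e1, sum_swap_cov m (fun γ β => NN α γ * dd β)]
      have e2 : ∀ γ ∈ L m, ∑ β ∈ upPF γ, NN α γ * dd β = 2 * (m+1) * (NN α γ * dd γ) := by
        intro γ hγ
        rw [mem_L] at hγ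
        rw [← Finset.mul_sum, sum_up m γ hγ]
        ring
      rw [Finset.sum_congr rfl e2, ← Finset.mul_sum, ih hle,
        Finset.prod_Ico_succ_top hle]
      ring
    · have hα : lvl α = m + 1 := by omega
      have e1 : ∀ β ∈ L (m+1), NN α β * dd β = if α = β then dd β else 0 := by
        intro β hβ
        rw [mem_L] at hβ
        rw [NN_eq_lvl_eq (by omega)]
        split <;> simp
      rw [Finset.sum_congr rfl e1, Finset.sum_ite_eq (L (m+1)) α dd,
        if_pos (mem_L.2 hα), hα]
      simp
lemma finsum_lvl (m : ℕ) (f : YP → ℕ) (h : ∀ x, lvl x ≠ m → f x = 0) :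
    ∑ᶠ x, f x = ∑ x ∈ L m, f x := by
  apply finsum_eq_finset_sum_of_support_subset
  intro x hx
  rw [Finset.mem_coe, mem_L]
  by_contra hc
  exact hx (h x hc)

/-- inner double-counting quantity -/
noncomputable def TT (i : ℕ) : ℕ :=
  ∑ b2 ∈ L (i-2), ∑ a ∈ L i,
    (∑ g ∈ L (i-1), if PairCov b2 g ∧ PairCov g a then dd g else 0) *
    (∑ g ∈ L (i-1), if PairCov b2 g ∧ PairCov g a then dd g else 0)

lemma prod_pow_fact (a : ℕ) : ∀ m, a ≤ m →
    2^a * a.factorial * ∏ j ∈ Finset.Ico a m, (2*(j+1)) = 2^m * m.factorial := by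
  intro m
  induction m with
  | zero =>
    intro h
    have : a = 0 := by omega
    subst this
    simp
  | succ m ih =>
    intro h
    rcases Nat.lt_or_ge a (m+1) with hlt | hge
    · have hle : a ≤ m := by omega
      rw [Finset.prod_Ico_succ_top hle]
      calc 2^a * a.factorial * ((∏ j ∈ Finset.Ico a m, (2*(j+1))) * (2*(m+1)))
          = (2^a * a.factorial * ∏ j ∈ Finset.Ico a m, (2*(j+1))) * (2*(m+1)) := by ring
        _ = 2^m * m.factorial * (2*(m+1)) := by rw [ih hle]
        _ = 2^(m+1) * (m+1).factorial := by
            rw [Nat.factorial_succ, pow_succ]; ring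
    · have : a = m + 1 := by omega
      subst this
      simp

lemma sum4_reorder {s1 s2 s3 s4 : Finset YP} (f : YP → YP → YP → YP → ℕ) :
    ∑ a ∈ s1, ∑ b ∈ s2, ∑ c ∈ s3, ∑ d ∈ s4, f a b c d
    = ∑ c ∈ s3, ∑ d ∈ s4, ∑ a ∈ s1, ∑ b ∈ s2, f a b c d := by
  have h1 : ∑ a ∈ s1, ∑ b ∈ s2, ∑ c ∈ s3, ∑ d ∈ s4, f a b c d
      = ∑ a ∈ s1, ∑ c ∈ s3, ∑ b ∈ s2, ∑ d ∈ s4, f a b c d :=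
    Finset.sum_congr rfl fun a _ => Finset.sum_comm
  have h2 : ∑ a ∈ s1, ∑ c ∈ s3, ∑ b ∈ s2, ∑ d ∈ s4, f a b c d
      = ∑ c ∈ s3, ∑ a ∈ s1, ∑ b ∈ s2, ∑ d ∈ s4, f a b c d := Finset.sum_comm
  have h3 : ∑ c ∈ s3, ∑ a ∈ s1, ∑ b ∈ s2, ∑ d ∈ s4, f a b c d
      = ∑ c ∈ s3, ∑ a ∈ s1, ∑ d ∈ s4, ∑ b ∈ s2, f a b c d :=
    Finset.sum_congr rfl fun c _ => Finset.sum_congr rfl fun a _ => Finset.sum_comm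
  have h4 : ∑ c ∈ s3, ∑ a ∈ s1, ∑ d ∈ s4, ∑ b ∈ s2, f a b c d
      = ∑ c ∈ s3, ∑ d ∈ s4, ∑ a ∈ s1, ∑ b ∈ s2, f a b c d :=
    Finset.sum_congr rfl fun c _ => Finset.sum_comm
  rw [h1, h2, h3, h4]

lemma S_eq {n i : ℕ} (h2 : 2 ≤ i) (hin : i ≤ n) :
    S n i = (∏ j ∈ Finset.Ico (i-1) (n-1), (2*(j+1))) * TT i := by
  -- Step 1: collapse conditional finsums into ifs
  have hS : S n i = ∑ᶠ (x1 : YP), ∑ᶠ (x2 : YP), ∑ᶠ (x3 : YP), ∑ᶠ (x4 : YP), ∑ᶠ (x5 : YP),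
      (if lvl x1 = n-1 ∧ lvl x2 = i-1 ∧ lvl x3 = i-2 ∧ lvl x4 = i ∧ lvl x5 = i-1 ∧
          PairCov x3 x2 ∧ PairCov x2 x4 ∧ PairCov x3 x5 ∧ PairCov x5 x4
        then NN x2 x1 * dd x5 * dd x1 else 0) := by
    unfold S
    refine finsum_congr fun x1 => finsum_congr fun x2 => finsum_congr fun x3 =>
      finsum_congr fun x4 => finsum_congr fun x5 => ?_
    simp only [finsum_eq_if, ← ite_and]
  rw [hS]
  -- Step 2: collapse finsums to finite sums over levels
  rw [finsum_lvl (n-1) _ (fun x hx => by simp [hx])]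
  have e2 : ∀ x1 ∈ L (n-1),
      (∑ᶠ (x2 : YP), ∑ᶠ (x3 : YP), ∑ᶠ (x4 : YP), ∑ᶠ (x5 : YP),
        (if lvl x1 = n-1 ∧ lvl x2 = i-1 ∧ lvl x3 = i-2 ∧ lvl x4 = i ∧ lvl x5 = i-1 ∧
          PairCov x3 x2 ∧ PairCov x2 x4 ∧ PairCov x3 x5 ∧ PairCov x5 x4
        then NN x2 x1 * dd x5 * dd x1 else 0))
      = ∑ x2 ∈ L (i-1), ∑ x3 ∈ L (i-2), ∑ x4 ∈ L i, ∑ x5 ∈ L (i-1),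
        (if PairCov x3 x2 ∧ PairCov x2 x4 ∧ PairCov x3 x5 ∧ PairCov x5 x4
          then NN x2 x1 * dd x5 * dd x1 else 0) := by
    intro x1 hx1
    rw [mem_L] at hx1
    rw [finsum_lvl (i-1) _ (fun x hx => by simp [hx])]
    refine Finset.sum_congr rfl fun x2 hx2 => ?_
    rw [mem_L] at hx2
    rw [finsum_lvl (i-2) _ (fun x hx => by simp [hx])]
    refine Finset.sum_congr rfl fun x3 hx3 => ?_
    rw [mem_L] at hx3
    rw [finsum_lvl i _ (fun x hx => by simp [hx])]
    refine Finset.sum_congr rfl fun x4 hx4 => ?_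
    rw [mem_L] at hx4
    rw [finsum_lvl (i-1) _ (fun x hx => by simp [hx])]
    refine Finset.sum_congr rfl fun x5 hx5 => ?_
    rw [mem_L] at hx5
    simp only [hx1, hx2, hx3, hx4, hx5, true_and]
  rw [Finset.sum_congr rfl e2]
  -- Step 3: factor and perform the βn1 sum
  have e3 : ∀ x1 x2 : YP, (∑ x3 ∈ L (i-2), ∑ x4 ∈ L i, ∑ x5 ∈ L (i-1),
      (if PairCov x3 x2 ∧ PairCov x2 x4 ∧ PairCov x3 x5 ∧ PairCov x5 x4
        then NN x2 x1 * dd x5 * dd x1 else 0))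
      = (NN x2 x1 * dd x1) * (∑ x3 ∈ L (i-2), ∑ x4 ∈ L i, ∑ x5 ∈ L (i-1),
        (if PairCov x3 x2 ∧ PairCov x2 x4 ∧ PairCov x3 x5 ∧ PairCov x5 x4
          then dd x5 else 0)) := by
    intro x1 x2
    rw [Finset.mul_sum]
    refine Finset.sum_congr rfl fun x3 _ => ?_
    rw [Finset.mul_sum]
    refine Finset.sum_congr rfl fun x4 _ => ?_
    rw [Finset.mul_sum]
    refine Finset.sum_congr rfl fun x5 _ => ?_
    split <;> ring
  have e3' : (∑ x1 ∈ L (n-1), ∑ x2 ∈ L (i-1), ∑ x3 ∈ L (i-2), ∑ x4 ∈ L i, ∑ x5 ∈ L (i-1),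
      (if PairCov x3 x2 ∧ PairCov x2 x4 ∧ PairCov x3 x5 ∧ PairCov x5 x4
        then NN x2 x1 * dd x5 * dd x1 else 0))
      = ∑ x2 ∈ L (i-1), (∑ x1 ∈ L (n-1), NN x2 x1 * dd x1) *
          (∑ x3 ∈ L (i-2), ∑ x4 ∈ L i, ∑ x5 ∈ L (i-1),
            (if PairCov x3 x2 ∧ PairCov x2 x4 ∧ PairCov x3 x5 ∧ PairCov x5 x4
              then dd x5 else 0)) := by
    rw [Finset.sum_comm]
    refine Finset.sum_congr rfl fun x2 _ => ?_
    rw [Finset.sum_mul]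
    exact Finset.sum_congr rfl fun x1 _ => e3 x1 x2
  rw [e3']
  -- apply the chain-counting identity
  have e4 : ∀ x2 ∈ L (i-1), (∑ x1 ∈ L (n-1), NN x2 x1 * dd x1)
      = dd x2 * ∏ j ∈ Finset.Ico (i-1) (n-1), (2*(j+1)) := by
    intro x2 hx2
    rw [mem_L] at hx2
    have := sum_NN_dd x2 (n-1) (by omega)
    rw [hx2] at this
    exact this
  have e5 : (∑ x2 ∈ L (i-1), (∑ x1 ∈ L (n-1), NN x2 x1 * dd x1) *
          (∑ x3 ∈ L (i-2), ∑ x4 ∈ L i, ∑ x5 ∈ L (i-1),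
            (if PairCov x3 x2 ∧ PairCov x2 x4 ∧ PairCov x3 x5 ∧ PairCov x5 x4
              then dd x5 else 0)))
      = (∏ j ∈ Finset.Ico (i-1) (n-1), (2*(j+1))) *
        ∑ x2 ∈ L (i-1), ∑ x3 ∈ L (i-2), ∑ x4 ∈ L i, ∑ x5 ∈ L (i-1),
            (if PairCov x3 x2 ∧ PairCov x2 x4 ∧ PairCov x3 x5 ∧ PairCov x5 x4
              then dd x2 * dd x5 else 0) := by
    rw [Finset.mul_sum]
    refine Finset.sum_congr rfl fun x2 hx2 => ?_
    rw [e4 x2 hx2]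
    rw [Finset.mul_sum, Finset.mul_sum]
    refine Finset.sum_congr rfl fun x3 _ => ?_
    rw [Finset.mul_sum, Finset.mul_sum]
    refine Finset.sum_congr rfl fun x4 _ => ?_
    rw [Finset.mul_sum, Finset.mul_sum]
    refine Finset.sum_congr rfl fun x5 _ => ?_
    split <;> ring
  rw [e5]
  congr 1
  -- Step 4: reorder and split the product
  have hre : (∑ x2 ∈ L (i-1), ∑ x3 ∈ L (i-2), ∑ x4 ∈ L i, ∑ x5 ∈ L (i-1),
      (if PairCov x3 x2 ∧ PairCov x2 x4 ∧ PairCov x3 x5 ∧ PairCov x5 x4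
        then dd x2 * dd x5 else 0))
      = ∑ x3 ∈ L (i-2), ∑ x4 ∈ L i, ∑ x2 ∈ L (i-1), ∑ x5 ∈ L (i-1),
      (if PairCov x3 x2 ∧ PairCov x2 x4 ∧ PairCov x3 x5 ∧ PairCov x5 x4
        then dd x2 * dd x5 else 0) := by
    have h1 : ∀ (u : Finset YP) (F : YP → YP → ℕ),
        ∑ x2 ∈ L (i-1), ∑ x3 ∈ u, F x2 x3 = ∑ x3 ∈ u, ∑ x2 ∈ L (i-1), F x2 x3 :=
      fun u F => Finset.sum_comm
    rw [h1]
    refine Finset.sum_congr rfl fun x3 _ => ?_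
    exact Finset.sum_comm
  rw [hre]
  unfold TT
  refine Finset.sum_congr rfl fun x3 _ => Finset.sum_congr rfl fun x4 _ => ?_
  rw [Finset.sum_mul_sum]
  refine Finset.sum_congr rfl fun x2 _ => Finset.sum_congr rfl fun x5 _ => ?_
  by_cases h1 : PairCov x3 x2 <;> by_cases h2 : PairCov x2 x4 <;>
    by_cases h3 : PairCov x3 x5 <;> by_cases h4 : PairCov x5 x4 <;>
    simp [h1, h2, h3, h4]

lemma ccP_le_one {γ δ : YP} (hl : lvl γ = lvl δ) (hne : γ ≠ δ) : ccP γ δ ≤ 1 := by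
  set m := lvl γ with hm
  set inf : YP := (γ.1 ⊓ δ.1, γ.2 ⊓ δ.2) with hinf
  have hli : lvl inf = (γ.1 ⊓ δ.1).card + (γ.2 ⊓ δ.2).card := rfl
  have hinf_le : lvl inf + 1 ≤ m := by
    have c1 : (γ.1 ⊓ δ.1).card ≤ γ.1.card := card_mono inf_le_left
    have c2 : (γ.2 ⊓ δ.2).card ≤ γ.2.card := card_mono inf_le_left
    have d1 : (γ.1 ⊓ δ.1).card ≤ δ.1.card := card_mono inf_le_right
    have d2 : (γ.2 ⊓ δ.2).card ≤ δ.2.card := card_mono inf_le_right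
    have hlγ : lvl γ = γ.1.card + γ.2.card := rfl
    have hlδ : lvl δ = δ.1.card + δ.2.card := rfl
    by_contra hcon
    have h1 : γ.1.card = (γ.1 ⊓ δ.1).card := by omega
    have h2 : γ.2.card = (γ.2 ⊓ δ.2).card := by omega
    have h3 : δ.1.card = (γ.1 ⊓ δ.1).card := by omega
    have h4 : δ.2.card = (γ.2 ⊓ δ.2).card := by omega
    have e1 : γ.1 ⊓ δ.1 = γ.1 := yd_eq_of_le_card inf_le_left (le_of_eq h1)
    have e2 : γ.2 ⊓ δ.2 = γ.2 := yd_eq_of_le_card inf_le_left (le_of_eq h2)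
    have e3 : γ.1 ⊓ δ.1 = δ.1 := yd_eq_of_le_card inf_le_right (le_of_eq h3)
    have e4 : γ.2 ⊓ δ.2 = δ.2 := yd_eq_of_le_card inf_le_right (le_of_eq h4)
    exact hne (Prod.ext (e1.symm.trans e3) (e2.symm.trans e4))
  rw [ccP, ← hm]
  apply Finset.card_le_one.2
  have key : ∀ β ∈ (L (m-1)).filter (fun β => PairCov β γ ∧ PairCov β δ), β = inf := by
    intro β hβ
    simp only [Finset.mem_filter, mem_L] at hβ
    obtain ⟨hβl, h1, h2⟩ := hβ
    rw [pairCov_iff] at h1 h2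
    have hs1 : β.1 ≤ γ.1 ⊓ δ.1 := le_inf h1.1 h2.1
    have hs2 : β.2 ≤ γ.2 ⊓ δ.2 := le_inf h1.2.1 h2.2.1
    have c1 := card_mono hs1
    have c2 := card_mono hs2
    have hlβ : lvl β = β.1.card + β.2.card := rfl
    have hm1 : 1 ≤ m := by
      have := pairCov_lvl (pairCov_iff.2 h1)
      omega
    have e1 : β.1 = γ.1 ⊓ δ.1 := yd_eq_of_le_card hs1 (by omega)
    have e2 : β.2 = γ.2 ⊓ δ.2 := yd_eq_of_le_card hs2 (by omega)
    exact Prod.ext e1 e2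
  intro a ha b hb
  rw [key a ha, key b hb]

lemma TT_eq (i : ℕ) (h2 : 2 ≤ i) :
    TT i = ∑ g ∈ L (i-1), ∑ g' ∈ L (i-1), ccP g g' * caP g g' * (dd g * dd g') := by
  unfold TT
  have e1 : ∀ b2 ∈ L (i-2), ∀ a ∈ L i,
      (∑ g ∈ L (i-1), if PairCov b2 g ∧ PairCov g a then dd g else 0) *
      (∑ g ∈ L (i-1), if PairCov b2 g ∧ PairCov g a then dd g else 0)
      = ∑ g ∈ L (i-1), ∑ g' ∈ L (i-1),
          (if PairCov b2 g ∧ PairCov g a then dd g else 0) *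
          (if PairCov b2 g' ∧ PairCov g' a then dd g' else 0) := by
    intro b2 _ a _
    rw [Finset.sum_mul_sum]
  rw [Finset.sum_congr rfl (fun b2 hb2 => Finset.sum_congr rfl (fun a ha => e1 b2 hb2 a ha))]
  rw [sum4_reorder]
  refine Finset.sum_congr rfl fun g hg => Finset.sum_congr rfl fun g' hg' => ?_
  rw [mem_L] at hg hg'
  -- now: ∑ b2 ∈ L (i-2), ∑ a ∈ L i, ... = ccP g g' * caP g g' * (dd g * dd g')
  have e2 : ∀ b2 a : YP,
      (if PairCov b2 g ∧ PairCov g a then dd g else 0) *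
      (if PairCov b2 g' ∧ PairCov g' a then dd g' else 0)
      = ((if PairCov b2 g ∧ PairCov b2 g' then 1 else 0) *
          (if PairCov g a ∧ PairCov g' a then 1 else 0)) * (dd g * dd g') := by
    intro b2 a
    by_cases p1 : PairCov b2 g <;> by_cases p2 : PairCov g a <;>
      by_cases p3 : PairCov b2 g' <;> by_cases p4 : PairCov g' a <;>
      simp [p1, p2, p3, p4]
  rw [Finset.sum_congr rfl (fun b2 _ => Finset.sum_congr rfl (fun a _ => e2 b2 a))]
  have hca : caP g g' = ∑ a ∈ L i, (if PairCov g a ∧ PairCov g' a then 1 else 0) := by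
    unfold caP
    rw [hg, show i - 1 + 1 = i from by omega, sum_ite_card, mul_one]
  have hcc : ccP g g' = ∑ b2 ∈ L (i-2), (if PairCov b2 g ∧ PairCov b2 g' then 1 else 0) := by
    unfold ccP
    rw [hg, show i - 1 - 1 = i - 2 from by omega, sum_ite_card, mul_one]
  have step : ∀ b2 : YP,
      (∑ a ∈ L i, ((if PairCov b2 g ∧ PairCov b2 g' then 1 else 0) *
        (if PairCov g a ∧ PairCov g' a then 1 else 0)) * (dd g * dd g'))
      = (if PairCov b2 g ∧ PairCov b2 g' then 1 else 0) *
          ((∑ a ∈ L i, (if PairCov g a ∧ PairCov g' a then 1 else 0)) * (dd g * dd g')) := by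
    intro b2
    rw [← Finset.sum_mul, ← Finset.mul_sum, mul_assoc]
  rw [Finset.sum_congr rfl (fun b2 _ => step b2), ← Finset.sum_mul, ← hca, ← hcc, ← mul_assoc]

lemma TT_le (i : ℕ) (h2 : 2 ≤ i) :
    TT i ≤ 4*(i-1)*(i-1) * (2^(i-2) * (i-2).factorial) + 4*(i-1) * (2^(i-1) * (i-1).factorial) := by
  rw [TT_eq i h2]
  have key : ∀ g ∈ L (i-1), ∀ g' ∈ L (i-1),
      ccP g g' * caP g g' * (dd g * dd g')
      ≤ ccP g g' * (dd g * dd g') +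
        (if g' = g then ((covPF g).card * (covPF g).card + (covPF g).card) * (dd g * dd g) else 0) := by
    intro g hg g' hg'
    rw [mem_L] at hg hg'
    rcases eq_or_ne g' g with rfl | hne
    · rw [if_pos rfl, E', ccP_self]
      nlinarith [Nat.zero_le ((covPF g').card), Nat.zero_le (dd g')]
    · rw [if_neg hne]
      have hca : caP g g' = ccP g g' := P1' (by omega) (fun h => hne h.symm)
      have hle := ccP_le_one (γ := g) (δ := g') (by omega) (fun h => hne h.symm)
      calc ccP g g' * caP g g' * (dd g * dd g')
          = ccP g g' * ccP g g' * (dd g * dd g') := by rw [hca]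
        _ ≤ 1 * ccP g g' * (dd g * dd g') := by
            exact Nat.mul_le_mul_right _ (Nat.mul_le_mul_right _ hle)
        _ = ccP g g' * (dd g * dd g') + 0 := by ring
        _ ≤ _ := by omega
  calc ∑ g ∈ L (i-1), ∑ g' ∈ L (i-1), ccP g g' * caP g g' * (dd g * dd g')
      ≤ ∑ g ∈ L (i-1), ∑ g' ∈ L (i-1), (ccP g g' * (dd g * dd g') +
        (if g' = g then ((covPF g).card * (covPF g).card + (covPF g).card) * (dd g * dd g) else 0)) :=
        Finset.sum_le_sum (fun g hg => Finset.sum_le_sum (fun g' hg' => key g hg g' hg'))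
    _ = (∑ g ∈ L (i-1), ∑ g' ∈ L (i-1), ccP g g' * (dd g * dd g')) +
        ∑ g ∈ L (i-1), ((covPF g).card * (covPF g).card + (covPF g).card) * (dd g * dd g) := by
        rw [← Finset.sum_add_distrib]
        refine Finset.sum_congr rfl fun g hg => ?_
        rw [Finset.sum_add_distrib]
        congr 1
        rw [Finset.sum_ite_eq' (L (i-1)) g
          (fun _ => ((covPF g).card * (covPF g).card + (covPF g).card) * (dd g * dd g)),
          if_pos hg]
    _ ≤ 4*(i-1)*(i-1) * (2^(i-2) * (i-2).factorial) + 4*(i-1) * (2^(i-1) * (i-1).factorial) := by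
        gcongr ?_ + ?_
        · -- (A)
          have hsum : ∀ g ∈ L (i-1), ∀ g' ∈ L (i-1), ccP g g' * (dd g * dd g')
              = ∑ b2 ∈ L (i-2), (if PairCov b2 g then dd g else 0) *
                  (if PairCov b2 g' then dd g' else 0) := by
            intro g hg g' hg'
            rw [mem_L] at hg
            have hcc : ccP g g' = ∑ b2 ∈ L (i-2),
                (if PairCov b2 g ∧ PairCov b2 g' then 1 else 0) := by
              unfold ccP
              rw [hg, show i - 1 - 1 = i - 2 from by omega, sum_ite_card, mul_one]
            rw [hcc, Finset.sum_mul]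
            refine Finset.sum_congr rfl fun b2 _ => ?_
            by_cases p1 : PairCov b2 g <;> by_cases p2 : PairCov b2 g' <;> simp [p1, p2]
          calc ∑ g ∈ L (i-1), ∑ g' ∈ L (i-1), ccP g g' * (dd g * dd g')
              = ∑ b2 ∈ L (i-2), (∑ g ∈ upPF b2, dd g) * (∑ g ∈ upPF b2, dd g) := by
                rw [Finset.sum_congr rfl (fun g hg => Finset.sum_congr rfl
                  (fun g' hg' => hsum g hg g' hg'))]
                rw [Finset.sum_congr rfl (fun g _ => Finset.sum_comm), Finset.sum_comm]
                refine Finset.sum_congr rfl fun b2 hb2 => ?_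
                rw [mem_L] at hb2
                rw [← Finset.sum_mul_sum]
                have hup : upPF b2 = (L (i-1)).filter (fun g => PairCov b2 g) := by
                  unfold upPF
                  rw [hb2, show i - 2 + 1 = i - 1 from by omega]
                rw [hup, Finset.sum_filter]
            _ = ∑ b2 ∈ L (i-2), (2*(i-2+1)*dd b2) * (2*(i-2+1)*dd b2) := by
                refine Finset.sum_congr rfl fun b2 hb2 => ?_
                rw [mem_L] at hb2
                rw [sum_up (i-2) b2 hb2]
            _ = 4*(i-1)*(i-1) * ∑ b2 ∈ L (i-2), dd b2 * dd b2 := by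
                rw [Finset.mul_sum, show i - 2 + 1 = i - 1 from by omega]
                exact Finset.sum_congr rfl fun b2 _ => by ring
            _ = 4*(i-1)*(i-1) * (2^(i-2) * (i-2).factorial) := by rw [sum_dd_sq]
            _ ≤ 4*(i-1)*(i-1) * (2^(i-2) * (i-2).factorial) := le_refl _
        · -- (B)
          have hbd : ∀ g ∈ L (i-1),
              ((covPF g).card * (covPF g).card + (covPF g).card) * (dd g * dd g)
              ≤ 4*(i-1) * (dd g * dd g) := by
            intro g hg
            rw [mem_L] at hg
            have hcb := corner_bound_pair hg
            have hle : (covPF g).card * (covPF g).card + (covPF g).card ≤ 4*(i-1) := by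
              nlinarith [hcb]
            exact Nat.mul_le_mul_right _ hle
          calc ∑ g ∈ L (i-1), ((covPF g).card * (covPF g).card + (covPF g).card) * (dd g * dd g)
              ≤ ∑ g ∈ L (i-1), 4*(i-1) * (dd g * dd g) := Finset.sum_le_sum hbd
            _ = 4*(i-1) * (2^(i-1) * (i-1).factorial) := by rw [← Finset.mul_sum, sum_dd_sq]

lemma main_aux {n i : ℕ} (h2 : 2 ≤ i) (hin : i ≤ n) :
    n * S n i ≤ 4 * (i - 1) * 2 ^ n * n.factorial := by
  rw [S_eq h2 hin]
  have hTT := TT_le i h2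
  obtain ⟨j, rfl⟩ : ∃ j, i = j + 2 := ⟨i - 2, by omega⟩
  obtain ⟨m, rfl⟩ : ∃ m, n = m + 1 := ⟨n - 1, by omega⟩
  have h6 : TT (j+2) ≤ 6 * (j+1) * (2^(j+1) * (j+1).factorial) := by
    calc TT (j+2) ≤ 4*(j+2-1)*(j+2-1) * (2^(j+2-2) * (j+2-2).factorial)
          + 4*(j+2-1) * (2^(j+2-1) * (j+2-1).factorial) := hTT
      _ = 4*(j+1)*(j+1)*(2^j * j.factorial) + 4*(j+1)*(2^(j+1)*(j+1).factorial) := by norm_num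
      _ = 6 * (j+1) * (2^(j+1) * (j+1).factorial) := by
          rw [Nat.factorial_succ, pow_succ]
          ring
  have hprod : 2^(j+1) * (j+1).factorial * ∏ x ∈ Finset.Ico (j+2-1) (m+1-1), (2*(x+1))
      = 2^m * m.factorial := by
    have := prod_pow_fact (j+1) m (by omega)
    simpa using this
  calc (m+1) * ((∏ x ∈ Finset.Ico (j+2-1) (m+1-1), (2*(x+1))) * TT (j+2))
      ≤ (m+1) * ((∏ x ∈ Finset.Ico (j+2-1) (m+1-1), (2*(x+1))) *
          (6 * (j+1) * (2^(j+1) * (j+1).factorial))) := by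
        exact Nat.mul_le_mul_left _ (Nat.mul_le_mul_left _ h6)
    _ = 6 * (j+1) * ((m+1) * (2^(j+1) * (j+1).factorial *
          ∏ x ∈ Finset.Ico (j+2-1) (m+1-1), (2*(x+1)))) := by ring
    _ = 6 * (j+1) * ((m+1) * (2^m * m.factorial)) := by rw [hprod]
    _ = 6 * ((j+1) * (m+1) * 2^m * m.factorial) := by ring
    _ ≤ 8 * ((j+1) * (m+1) * 2^m * m.factorial) := Nat.mul_le_mul_right _ (by norm_num)
    _ = 4 * (j+2-1) * 2^(m+1) * (m+1).factorial := by
        rw [Nat.factorial_succ, pow_succ]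
        norm_num
        ring

end Aux

/-- **Bound `#Hom(ℋᵢⁿ ↑ 𝒬; 𝓑) ≤ (4(i-1)/n) |B_n|` for the Weyl group `B_n`:**
for `2 ≤ i ≤ n`, `n · S(n, i) ≤ 4(i-1) · 2ⁿ · n!`. -/
theorem hom_H_le (n i : ℕ) (h2 : 2 ≤ i) (hin : i ≤ n) :
    n * S n i ≤ 4 * (i - 1) * 2 ^ n * n.factorial := by
  exact Aux.main_aux h2 hin
end
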